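/- arXiv:1302.2274 — 7 statements merged into one kernel-verified Lean document; each statement's English description precedes it below -/
import Mathlib

section
/- For all a,b,c,d ∈ ℕ and all n, the number of 132-avoiding permutations σ of length n with exactly m matches of MMP(a,b,c,d) equals the number of 132-avoiding permutations of length n with exactly m matches of MMP(a,d,c,b), for every m. -/
open Finset

/-- σ avoids the classical pattern 132. -/
def avoids132 {n : ℕ} (σ : Equiv.Perm (Fin n)) : Prop :=
  ¬ ∃ i j k : Fin n, i < j ∧ j < k ∧ σ i < σ k ∧ σ k < σ j

/-- position `i` matches the quadrant marked mesh pattern MMP(a,b,c,d) in σ. -/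
def mmpMatch {n : ℕ} (a b c d : ℕ) (σ : Equiv.Perm (Fin n)) (i : Fin n) : Prop :=
  a ≤ (Finset.univ.filter fun j => i < j ∧ σ i < σ j).card ∧
  b ≤ (Finset.univ.filter fun j => j < i ∧ σ i < σ j).card ∧
  c ≤ (Finset.univ.filter fun j => j < i ∧ σ j < σ i).card ∧
  d ≤ (Finset.univ.filter fun j => i < j ∧ σ j < σ i).card

/-- the number of positions of σ matching MMP(a,b,c,d). -/
noncomputable def mmp {n : ℕ} (a b c d : ℕ) (σ : Equiv.Perm (Fin n)) : ℕ :=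
  Nat.card {i : Fin n // mmpMatch a b c d σ i}

lemma card_filter_perm {n : ℕ} (σ : Equiv.Perm (Fin n)) (p : Fin n → Prop)
    [DecidablePred p] :
    (Finset.univ.filter fun j => p (σ j)).card = (Finset.univ.filter p).card := by
  apply Finset.card_bij (fun j _ => σ j)
  · intro j hj; simp at hj ⊢; exact hj
  · intro j _ k _ h; exact σ.injective h
  · intro j hj; simp at hj; exact ⟨σ⁻¹ j, by simpa using hj, by simp⟩

lemma mmpMatch_inv {n : ℕ} (a b c d : ℕ) (σ : Equiv.Perm (Fin n)) (i : Fin n) :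
    mmpMatch a b c d σ⁻¹ (σ i) ↔ mmpMatch a d c b σ i := by
  unfold mmpMatch
  have h1 : (Finset.univ.filter fun j => σ i < j ∧ σ⁻¹ (σ i) < σ⁻¹ j).card
      = (Finset.univ.filter fun j => i < j ∧ σ i < σ j).card := by
    rw [← card_filter_perm σ (fun j => σ i < j ∧ σ⁻¹ (σ i) < σ⁻¹ j)]
    simp [and_comm]
  have h2 : (Finset.univ.filter fun j => j < σ i ∧ σ⁻¹ (σ i) < σ⁻¹ j).card
      = (Finset.univ.filter fun j => i < j ∧ σ j < σ i).card := by
    rw [← card_filter_perm σ (fun j => j < σ i ∧ σ⁻¹ (σ i) < σ⁻¹ j)]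
    simp [and_comm]
  have h3 : (Finset.univ.filter fun j => j < σ i ∧ σ⁻¹ j < σ⁻¹ (σ i)).card
      = (Finset.univ.filter fun j => j < i ∧ σ j < σ i).card := by
    rw [← card_filter_perm σ (fun j => j < σ i ∧ σ⁻¹ j < σ⁻¹ (σ i))]
    simp [and_comm]
  have h4 : (Finset.univ.filter fun j => σ i < j ∧ σ⁻¹ j < σ⁻¹ (σ i)).card
      = (Finset.univ.filter fun j => j < i ∧ σ i < σ j).card := by
    rw [← card_filter_perm σ (fun j => σ i < j ∧ σ⁻¹ j < σ⁻¹ (σ i))]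
    simp [and_comm]
  rw [h1, h2, h3, h4]
  tauto

lemma mmp_inv {n : ℕ} (a b c d : ℕ) (σ : Equiv.Perm (Fin n)) :
    mmp a b c d σ⁻¹ = mmp a d c b σ := by
  unfold mmp
  apply Nat.card_eq_of_bijective (fun x => ⟨σ⁻¹ x.1, by
    have := x.2
    rw [show (x.1 : Fin n) = σ (σ⁻¹ x.1) by simp] at this
    exact (mmpMatch_inv a b c d σ (σ⁻¹ x.1)).mp this⟩)
  constructor
  · intro x y h
    have : (σ⁻¹ x.1 : Fin n) = σ⁻¹ y.1 := congrArg Subtype.val h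
    exact Subtype.ext (σ⁻¹.injective this)
  · intro y
    refine ⟨⟨σ y.1, ?_⟩, by simp⟩
    exact (mmpMatch_inv a b c d σ y.1).mpr y.2

lemma avoids132_inv {n : ℕ} (σ : Equiv.Perm (Fin n)) (h : avoids132 σ) :
    avoids132 σ⁻¹ := by
  rintro ⟨i, j, k, hij, hjk, h1, h2⟩
  exact h ⟨σ⁻¹ i, σ⁻¹ k, σ⁻¹ j, h1, h2, by simpa using hij, by simpa using hjk⟩

theorem stmt1 (a b c d n m : ℕ) :
    Nat.card {σ : Equiv.Perm (Fin n) // avoids132 σ ∧ mmp a b c d σ = m} =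
    Nat.card {σ : Equiv.Perm (Fin n) // avoids132 σ ∧ mmp a d c b σ = m} := by
  apply Nat.card_eq_of_bijective (fun x => ⟨x.1⁻¹,
    avoids132_inv x.1 x.2.1, by rw [mmp_inv a d c b x.1]; exact x.2.2⟩)
  constructor
  · intro x y h
    have : (x.1)⁻¹ = (y.1)⁻¹ := congrArg Subtype.val h
    exact Subtype.ext (inv_injective this)
  · intro y
    refine ⟨⟨y.1⁻¹, avoids132_inv y.1 y.2.1, ?_⟩, by simp⟩
    rw [mmp_inv a b c d y.1]
    exact y.2.2
end

section
/- For k,ℓ ≥ 1 and n ≥ 1, the polynomial Q_{n,132}^{(k,0,ℓ,0)}(x) := Σ_{σ∈S_n(132)} x^{mmp^{(k,0,ℓ,0)}(σ)} satisfies the recursion Q_{n,132}^{(k,0,ℓ,0)}(x) = Σ_{i=1}^{n} Q_{i-1,132}^{(k-1,0,ℓ,0)}(x) · Q_{n-i,132}^{(k,0,ℓ,0)}(x), with Q_{0,132}^{(a,b,c,d)}(x) = 1. -/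
open Finset

open scoped Classical in
/-- the distribution polynomial Q_{n,132}^{(a,b,c,d)}(x). -/
noncomputable def Q (n a b c d : ℕ) : Polynomial ℕ :=
  ∑ σ : Equiv.Perm (Fin n),
    if avoids132 σ then Polynomial.X ^ (mmp a b c d σ) else 0


section
open Equiv

namespace MyAux
variable {m r : ℕ}

def embFun (m r : ℕ) (α : Perm (Fin m)) (β : Perm (Fin r)) (j : Fin (m+1+r)) : Fin (m+1+r) :=
  if h : (j : ℕ) < m then ⟨r + (α ⟨j, h⟩ : ℕ), by have := (α ⟨j, h⟩).isLt; omega⟩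
  else if h2 : (j : ℕ) = m then ⟨m + r, by omega⟩
  else ⟨(β ⟨(j : ℕ) - (m+1), by have := j.isLt; omega⟩ : ℕ),
    by have := (β ⟨(j : ℕ) - (m+1), by have := j.isLt; omega⟩).isLt; omega⟩

lemma embFun_lt (α : Perm (Fin m)) (β : Perm (Fin r)) (j : Fin (m+1+r)) (hj : (j:ℕ) < m) :
    ((embFun m r α β) j : ℕ) = r + α ⟨j, hj⟩ := by
  unfold embFun; rw [dif_pos hj]

lemma embFun_eq (α : Perm (Fin m)) (β : Perm (Fin r)) (j : Fin (m+1+r)) (hj : (j:ℕ) = m) :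
    ((embFun m r α β) j : ℕ) = m + r := by
  unfold embFun; rw [dif_neg (by omega), dif_pos hj]

lemma embFun_gt (α : Perm (Fin m)) (β : Perm (Fin r)) (j : Fin (m+1+r)) (hj : m < (j:ℕ)) :
    ((embFun m r α β) j : ℕ) = β ⟨(j:ℕ) - (m+1), by have := j.isLt; omega⟩ := by
  unfold embFun; rw [dif_neg (by omega), dif_neg (by omega)]

lemma embFun_inj (α : Perm (Fin m)) (β : Perm (Fin r)) : Function.Injective (embFun m r α β) := by
  intro x y hxy
  have hv : ((embFun m r α β x : Fin _) : ℕ) = embFun m r α β y := congrArg Fin.val hxy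
  rcases lt_trichotomy ((x:ℕ)) m with hx | hx | hx <;>
    rcases lt_trichotomy ((y:ℕ)) m with hy | hy | hy
  · rw [embFun_lt α β x hx, embFun_lt α β y hy] at hv
    have h1 : α ⟨(x:ℕ), hx⟩ = α ⟨(y:ℕ), hy⟩ := Fin.ext (by omega)
    have h2 := congrArg Fin.val (α.injective h1)
    exact Fin.ext (by simpa using h2)
  · rw [embFun_lt α β x hx, embFun_eq α β y hy] at hv
    have := (α ⟨(x:ℕ), hx⟩).isLt; omega
  · rw [embFun_lt α β x hx, embFun_gt α β y hy] at hv
    have := (β ⟨(y:ℕ) - (m+1), by have := y.isLt; omega⟩).isLt; omega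
  · rw [embFun_eq α β x hx, embFun_lt α β y hy] at hv
    have := (α ⟨(y:ℕ), hy⟩).isLt; omega
  · exact Fin.ext (by omega)
  · rw [embFun_eq α β x hx, embFun_gt α β y hy] at hv
    have := (β ⟨(y:ℕ) - (m+1), by have := y.isLt; omega⟩).isLt; omega
  · rw [embFun_gt α β x hx, embFun_lt α β y hy] at hv
    have := (β ⟨(x:ℕ) - (m+1), by have := x.isLt; omega⟩).isLt; omega
  · rw [embFun_gt α β x hx, embFun_eq α β y hy] at hv
    have := (β ⟨(x:ℕ) - (m+1), by have := x.isLt; omega⟩).isLt; omega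
  · rw [embFun_gt α β x hx, embFun_gt α β y hy] at hv
    have h1 : β ⟨(x:ℕ) - (m+1), by have := x.isLt; omega⟩
        = β ⟨(y:ℕ) - (m+1), by have := y.isLt; omega⟩ := Fin.ext (by omega)
    have h2 := congrArg Fin.val (β.injective h1)
    simp only [Fin.val_mk] at h2
    exact Fin.ext (by omega)

noncomputable def emb (m r : ℕ) (α : Perm (Fin m)) (β : Perm (Fin r)) : Perm (Fin (m+1+r)) :=
  Equiv.ofBijective _ (Finite.injective_iff_bijective.mp (embFun_inj α β))

lemma emb_lt (α : Perm (Fin m)) (β : Perm (Fin r)) (j : Fin (m+1+r)) (hj : (j:ℕ) < m) :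
    ((emb m r α β) j : ℕ) = r + α ⟨j, hj⟩ := embFun_lt α β j hj

lemma emb_eq (α : Perm (Fin m)) (β : Perm (Fin r)) (j : Fin (m+1+r)) (hj : (j:ℕ) = m) :
    ((emb m r α β) j : ℕ) = m + r := embFun_eq α β j hj

lemma emb_gt (α : Perm (Fin m)) (β : Perm (Fin r)) (j : Fin (m+1+r)) (hj : m < (j:ℕ)) :
    ((emb m r α β) j : ℕ) = β ⟨(j:ℕ) - (m+1), by have := j.isLt; omega⟩ :=
  embFun_gt α β j hj

lemma emb_apply_l (α : Perm (Fin m)) (β : Perm (Fin r)) (x : Fin m) :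
    ((emb m r α β) (Fin.castAdd r x.castSucc) : ℕ) = r + α x := by
  rw [emb_lt α β _ (by simp)]
  exact congrArg (r + ·) (congrArg Fin.val (congrArg α (Fin.ext (by simp))))

lemma emb_apply_m (α : Perm (Fin m)) (β : Perm (Fin r)) :
    ((emb m r α β) (Fin.castAdd r (Fin.last m)) : ℕ) = m + r :=
  emb_eq α β _ (by simp)

lemma emb_apply_r (α : Perm (Fin m)) (β : Perm (Fin r)) (y : Fin r) :
    ((emb m r α β) (Fin.natAdd (m+1) y) : ℕ) = β y := by
  rw [emb_gt α β _ (by simp; omega)]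
  exact congrArg Fin.val (congrArg β (Fin.ext (by simp)))


lemma avoid_emb (α : Perm (Fin m)) (β : Perm (Fin r)) :
    avoids132 (emb m r α β) ↔ avoids132 α ∧ avoids132 β := by
  constructor
  · intro h
    constructor
    · rintro ⟨i, j, k, h1, h2, h3, h4⟩
      refine h ⟨Fin.castAdd r i.castSucc, Fin.castAdd r j.castSucc, Fin.castAdd r k.castSucc,
        ?_, ?_, ?_, ?_⟩ <;>
        simp only [Fin.lt_def, Fin.coe_castAdd, Fin.coe_castSucc, emb_apply_l]
      · exact h1
      · exact h2
      · exact Nat.add_lt_add_left h3 r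
      · exact Nat.add_lt_add_left h4 r
    · rintro ⟨i, j, k, h1, h2, h3, h4⟩
      refine h ⟨Fin.natAdd (m+1) i, Fin.natAdd (m+1) j, Fin.natAdd (m+1) k,
        ?_, ?_, ?_, ?_⟩ <;>
        simp only [Fin.lt_def, Fin.coe_natAdd, emb_apply_r]
      · exact Nat.add_lt_add_left h1 _
      · exact Nat.add_lt_add_left h2 _
      · exact h3
      · exact h4
  · rintro ⟨ha, hb⟩ ⟨i, j, k, h1, h2, h3, h4⟩
    rw [Fin.lt_def] at h1 h2 h3 h4
    rcases lt_trichotomy ((k:ℕ)) m with hk | hk | hk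
    · -- all three in the left block
      have hi : (i:ℕ) < m := by omega
      have hj : (j:ℕ) < m := by omega
      rw [emb_lt α β i hi, emb_lt α β k hk] at h3
      rw [emb_lt α β k hk, emb_lt α β j hj] at h4
      exact ha ⟨⟨i, hi⟩, ⟨j, hj⟩, ⟨k, hk⟩, Fin.mk_lt_mk.mpr h1, Fin.mk_lt_mk.mpr h2,
        Fin.lt_def.mpr (by omega), Fin.lt_def.mpr (by omega)⟩
    · -- k is the max position : σ k = m + r maximal, contradicting h4
      have hj : (j:ℕ) < m := by omega
      rw [emb_eq α β k hk, emb_lt α β j hj] at h4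
      have := (α ⟨(j:ℕ), hj⟩).isLt
      omega
    · -- k in the right block
      rcases lt_trichotomy ((j:ℕ)) m with hj | hj | hj
      · have hi : (i:ℕ) < m := by omega
        rw [emb_lt α β i hi, emb_gt α β k hk] at h3
        have := (β ⟨(k:ℕ) - (m+1), by have := k.isLt; omega⟩).isLt
        omega
      · have hi : (i:ℕ) < m := by omega
        rw [emb_lt α β i hi, emb_gt α β k hk] at h3
        have := (β ⟨(k:ℕ) - (m+1), by have := k.isLt; omega⟩).isLt
        omega
      · rcases lt_trichotomy ((i:ℕ)) m with hi | hi | hi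
        · rw [emb_lt α β i hi, emb_gt α β k hk] at h3
          have := (β ⟨(k:ℕ) - (m+1), by have := k.isLt; omega⟩).isLt
          omega
        · rw [emb_eq α β i hi, emb_gt α β k hk] at h3
          have := (β ⟨(k:ℕ) - (m+1), by have := k.isLt; omega⟩).isLt
          omega
        · -- all three in the right block
          rw [emb_gt α β i hi, emb_gt α β k hk] at h3
          rw [emb_gt α β k hk, emb_gt α β j hj] at h4
          refine hb ⟨⟨(i:ℕ) - (m+1), by have := i.isLt; omega⟩,
            ⟨(j:ℕ) - (m+1), by have := j.isLt; omega⟩,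
            ⟨(k:ℕ) - (m+1), by have := k.isLt; omega⟩,
            Fin.mk_lt_mk.mpr (by omega), Fin.mk_lt_mk.mpr (by omega),
            Fin.lt_def.mpr (by omega), Fin.lt_def.mpr (by omega)⟩


variable (α : Perm (Fin m)) (β : Perm (Fin r))

lemma cA_l (x : Fin m) :
    (univ.filter fun j => Fin.castAdd r x.castSucc < j ∧
      emb m r α β (Fin.castAdd r x.castSucc) < emb m r α β j).card
    = (univ.filter fun j => x < j ∧ α x < α j).card + 1 := by
  rw [Finset.card_filter, Finset.card_filter, Fin.sum_univ_add, Fin.sum_univ_castSucc]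
  trans ((∑ x' : Fin m, if x < x' ∧ α x < α x' then 1 else 0) + 1 + 0)
  · refine congrArg₂ _ (congrArg₂ _ ?_ ?_) ?_
    · refine Finset.sum_congr rfl fun x' _ => ?_
      refine if_congr ?_ rfl rfl
      simp only [Fin.lt_def, Fin.coe_castAdd, Fin.coe_castSucc, emb_apply_l]
      omega
    · refine if_pos ⟨?_, ?_⟩
      · simp only [Fin.lt_def, Fin.coe_castAdd, Fin.coe_castSucc, Fin.val_last]
        exact x.isLt
      · rw [Fin.lt_def, emb_apply_l, emb_apply_m]
        have := (α x).isLt; omega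
    · refine Finset.sum_eq_zero fun y _ => if_neg ?_
      simp only [Fin.lt_def, Fin.coe_castAdd, Fin.coe_castSucc, Fin.coe_natAdd,
        emb_apply_l, emb_apply_r]
      have := (β y).isLt; omega
  · omega

lemma cC_l (x : Fin m) :
    (univ.filter fun j => j < Fin.castAdd r x.castSucc ∧
      emb m r α β j < emb m r α β (Fin.castAdd r x.castSucc)).card
    = (univ.filter fun j => j < x ∧ α j < α x).card := by
  rw [Finset.card_filter, Finset.card_filter, Fin.sum_univ_add, Fin.sum_univ_castSucc]
  trans ((∑ x' : Fin m, if x' < x ∧ α x' < α x then 1 else 0) + 0 + 0)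
  · refine congrArg₂ _ (congrArg₂ _ ?_ ?_) ?_
    · refine Finset.sum_congr rfl fun x' _ => ?_
      refine if_congr ?_ rfl rfl
      simp only [Fin.lt_def, Fin.coe_castAdd, Fin.coe_castSucc, emb_apply_l]
      omega
    · refine if_neg ?_
      simp only [Fin.lt_def, Fin.coe_castAdd, Fin.coe_castSucc, Fin.val_last]
      have := x.isLt; omega
    · refine Finset.sum_eq_zero fun y _ => if_neg ?_
      simp only [Fin.lt_def, Fin.coe_castAdd, Fin.coe_castSucc, Fin.coe_natAdd]
      omega
  · omega

lemma cA_m :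
    (univ.filter fun j => Fin.castAdd r (Fin.last m) < j ∧
      emb m r α β (Fin.castAdd r (Fin.last m)) < emb m r α β j).card = 0 := by
  rw [Finset.card_filter]
  refine Finset.sum_eq_zero fun j _ => if_neg ?_
  rintro ⟨hj1, hj2⟩
  rw [Fin.lt_def] at hj1 hj2
  simp only [Fin.coe_castAdd, Fin.val_last] at hj1
  rw [emb_apply_m, emb_gt α β j (by omega)] at hj2
  have := (β ⟨(j:ℕ) - (m+1), by have := j.isLt; omega⟩).isLt
  omega

lemma cA_r (y : Fin r) :
    (univ.filter fun j => Fin.natAdd (m+1) y < j ∧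
      emb m r α β (Fin.natAdd (m+1) y) < emb m r α β j).card
    = (univ.filter fun j => y < j ∧ β y < β j).card := by
  rw [Finset.card_filter, Finset.card_filter, Fin.sum_univ_add, Fin.sum_univ_castSucc]
  trans (0 + 0 + ∑ y' : Fin r, if y < y' ∧ β y < β y' then 1 else 0)
  · refine congrArg₂ _ (congrArg₂ _ ?_ ?_) ?_
    · refine Finset.sum_eq_zero fun x' _ => if_neg ?_
      simp only [Fin.lt_def, Fin.coe_castAdd, Fin.coe_castSucc, Fin.coe_natAdd]
      have := x'.isLt; omega
    · refine if_neg ?_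
      simp only [Fin.lt_def, Fin.coe_castAdd, Fin.coe_natAdd, Fin.val_last]
      omega
    · refine Finset.sum_congr rfl fun y' _ => ?_
      refine if_congr ?_ rfl rfl
      simp only [Fin.lt_def, Fin.coe_natAdd, emb_apply_r]
      omega
  · omega

lemma cC_r (y : Fin r) :
    (univ.filter fun j => j < Fin.natAdd (m+1) y ∧
      emb m r α β j < emb m r α β (Fin.natAdd (m+1) y)).card
    = (univ.filter fun j => j < y ∧ β j < β y).card := by
  rw [Finset.card_filter, Finset.card_filter, Fin.sum_univ_add, Fin.sum_univ_castSucc]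
  trans (0 + 0 + ∑ y' : Fin r, if y' < y ∧ β y' < β y then 1 else 0)
  · refine congrArg₂ _ (congrArg₂ _ ?_ ?_) ?_
    · refine Finset.sum_eq_zero fun x' _ => if_neg ?_
      simp only [Fin.lt_def, Fin.coe_castAdd, Fin.coe_castSucc, Fin.coe_natAdd,
        emb_apply_l, emb_apply_r]
      have := (β y).isLt; omega
    · refine if_neg ?_
      simp only [Fin.lt_def, Fin.coe_castAdd, Fin.coe_natAdd, Fin.val_last,
        emb_apply_m, emb_apply_r]
      have := (β y).isLt; omega
    · refine Finset.sum_congr rfl fun y' _ => ?_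
      refine if_congr ?_ rfl rfl
      simp only [Fin.lt_def, Fin.coe_natAdd, emb_apply_r]
      omega
  · omega


lemma match_l (k l : ℕ) (hk : 1 ≤ k) (x : Fin m) :
    mmpMatch k 0 l 0 (emb m r α β) (Fin.castAdd r x.castSucc) ↔ mmpMatch (k-1) 0 l 0 α x := by
  simp only [mmpMatch, cA_l, cC_l, Nat.zero_le, true_and, and_true]
  omega

lemma match_m (k l : ℕ) (hk : 1 ≤ k) :
    ¬ mmpMatch k 0 l 0 (emb m r α β) (Fin.castAdd r (Fin.last m)) := by
  intro h
  have h1 := h.1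
  rw [cA_m] at h1
  omega

lemma match_r (k l : ℕ) (y : Fin r) :
    mmpMatch k 0 l 0 (emb m r α β) (Fin.natAdd (m+1) y) ↔ mmpMatch k 0 l 0 β y := by
  simp only [mmpMatch, cA_r, cC_r, Nat.zero_le, true_and, and_true]

lemma mmp_eq_card {N a b c d : ℕ} (σ : Perm (Fin N)) [DecidablePred (mmpMatch a b c d σ)] :
    mmp a b c d σ = (univ.filter (mmpMatch a b c d σ)).card := by
  rw [mmp, Nat.card_eq_fintype_card, Fintype.card_subtype]

lemma mmp_emb (k l : ℕ) (hk : 1 ≤ k) :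
    mmp k 0 l 0 (emb m r α β) = mmp (k-1) 0 l 0 α + mmp k 0 l 0 β := by
  classical
  rw [mmp_eq_card, mmp_eq_card, mmp_eq_card,
    Finset.card_filter, Finset.card_filter, Finset.card_filter,
    Fin.sum_univ_add, Fin.sum_univ_castSucc]
  trans ((∑ x : Fin m, if mmpMatch (k-1) 0 l 0 α x then 1 else 0) + 0 +
    ∑ y : Fin r, if mmpMatch k 0 l 0 β y then 1 else 0)
  · refine congrArg₂ _ (congrArg₂ _ ?_ ?_) ?_
    · exact Finset.sum_congr rfl fun x _ => if_congr (match_l α β k l hk x) rfl rfl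
    · exact if_neg (match_m α β k l hk)
    · exact Finset.sum_congr rfl fun y _ => if_congr (match_r α β k l y) rfl rfl
  · omega


lemma block (σ : Perm (Fin (m+1+r))) (hav : avoids132 σ)
    (htop : (σ ⟨m, by omega⟩ : ℕ) = m + r) :
    (∀ j : Fin (m+1+r), (j:ℕ) < m → r ≤ (σ j : ℕ) ∧ (σ j : ℕ) < m + r) ∧
    (∀ j : Fin (m+1+r), m < (j:ℕ) → (σ j : ℕ) < r) := by
  classical
  set A : Finset (Fin (m+1+r)) := univ.filter (fun j => (j:ℕ) < m) with hA
  set B : Finset (Fin (m+1+r)) := univ.filter (fun j => r ≤ (σ j : ℕ) ∧ (σ j : ℕ) < m + r) with hB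
  have hne : ∀ j : Fin (m+1+r), (j:ℕ) ≠ m → (σ j : ℕ) ≠ m + r := by
    intro j hj h
    have : σ j = σ ⟨m, by omega⟩ := Fin.ext (by rw [htop]; exact h)
    have := congrArg Fin.val (σ.injective this)
    simp at this; omega
  have hAcard : A.card = m := by
    rw [hA, Finset.card_filter, Fin.sum_univ_add, Fin.sum_univ_castSucc]
    trans ((∑ _x : Fin m, 1) + 0 + 0)
    · refine congrArg₂ _ (congrArg₂ _ ?_ ?_) ?_
      · exact Finset.sum_congr rfl fun x _ => if_pos (by simp)
      · exact if_neg (by simp)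
      · exact Finset.sum_eq_zero fun y _ => if_neg (by simp; omega)
    · simp
  have hBcard : B.card = m := by
    have h : B.card = (univ : Finset (Fin m)).card := by
      refine Finset.card_bij' (fun j hj => ⟨(σ j : ℕ) - r, ?_⟩)
        (fun x _ => σ.symm ⟨r + (x:ℕ), by have := x.isLt; omega⟩) ?_ ?_ ?_ ?_
      · have := (Finset.mem_filter.mp hj).2; omega
      · intro j hj; exact Finset.mem_univ _
      · intro x _
        simp only [hB, Finset.mem_filter]
        refine ⟨Finset.mem_univ _, ?_⟩
        rw [Equiv.apply_symm_apply]
        have := x.isLt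
        constructor <;> simp <;> omega
      · intro j hj
        have h2 := (Finset.mem_filter.mp hj).2
        apply σ.injective
        rw [Equiv.apply_symm_apply]
        exact Fin.ext (by simp; omega)
      · intro x _
        apply Fin.ext
        simp only [Fin.val_mk, Equiv.apply_symm_apply]
        omega
    simpa using h
  have hAB : A = B := by
    by_contra hne'
    have h1 : ¬ A ⊆ B := by
      intro hsub
      exact hne' (Finset.eq_of_subset_of_card_le hsub (by omega))
    have h2 : ¬ B ⊆ A := by
      intro hsub
      exact hne' (Finset.eq_of_subset_of_card_le hsub (by omega)).symm
    obtain ⟨a, haA, haB⟩ := Finset.not_subset.mp h1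
    obtain ⟨b, hbB, hbA⟩ := Finset.not_subset.mp h2
    rw [hA, Finset.mem_filter] at haA hbA
    rw [hB, Finset.mem_filter] at haB hbB
    simp only [Finset.mem_univ, true_and] at haA haB hbA hbB
    have ha2 : (σ a : ℕ) < r := by
      have := hne a (by omega)
      have := (σ a).isLt
      omega
    have hb2 : m < (b:ℕ) := by
      rcases Nat.lt_trichotomy m ((b:ℕ)) with h | h | h
      · exact h
      · exfalso
        have hbm : b = (⟨m, by omega⟩ : Fin (m+1+r)) := Fin.ext h.symm
        rw [hbm, htop] at hbB
        omega
      · exact absurd h hbA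
    exact hav ⟨a, ⟨m, by omega⟩, b, Fin.lt_def.mpr (by simp; omega),
      Fin.lt_def.mpr (by simp; omega), Fin.lt_def.mpr (by omega),
      Fin.lt_def.mpr (by rw [htop]; omega)⟩
  constructor
  · intro j hj
    have : j ∈ B := hAB ▸ (Finset.mem_filter.mpr ⟨Finset.mem_univ _, hj⟩)
    exact (Finset.mem_filter.mp this).2
  · intro j hj
    have hnB : j ∉ B := by
      rw [← hAB, hA, Finset.mem_filter]
      push_neg
      intro _
      omega
    rw [hB, Finset.mem_filter] at hnB
    push_neg at hnB
    have h1 := hnB (Finset.mem_univ _)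
    have := hne j (by omega)
    have := (σ j).isLt
    by_contra h
    have := h1 (by omega)
    omega

lemma exists_emb (σ : Perm (Fin (m+1+r))) (hav : avoids132 σ)
    (htop : (σ ⟨m, by omega⟩ : ℕ) = m + r) :
    ∃ (α : Perm (Fin m)) (β : Perm (Fin r)), emb m r α β = σ := by
  obtain ⟨hL, hR⟩ := block σ hav htop
  have hbl : ∀ x : Fin m, r ≤ (σ (Fin.castAdd r x.castSucc) : ℕ) ∧
      (σ (Fin.castAdd r x.castSucc) : ℕ) < m + r := fun x => hL _ (by simp)
  have hαinj : Function.Injective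
      (fun x : Fin m => (⟨(σ (Fin.castAdd r x.castSucc) : ℕ) - r,
        by have := hbl x; omega⟩ : Fin m)) := by
    intro x y hxy
    simp only [Fin.mk.injEq] at hxy
    have h1 := hbl x; have h2 := hbl y
    have : σ (Fin.castAdd r x.castSucc) = σ (Fin.castAdd r y.castSucc) := Fin.ext (by omega)
    have := congrArg Fin.val (σ.injective this)
    simp at this
    exact Fin.ext this
  have hbr : ∀ y : Fin r, (σ (Fin.natAdd (m+1) y) : ℕ) < r := fun y => hR _ (by simp; omega)
  have hβinj : Function.Injective
      (fun y : Fin r => (⟨(σ (Fin.natAdd (m+1) y) : ℕ), hbr y⟩ : Fin r)) := by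
    intro x y hxy
    simp only [Fin.mk.injEq] at hxy
    have := congrArg Fin.val (σ.injective (Fin.ext hxy))
    simp at this
    exact Fin.ext this
  refine ⟨Equiv.ofBijective _ (Finite.injective_iff_bijective.mp hαinj),
    Equiv.ofBijective _ (Finite.injective_iff_bijective.mp hβinj), Equiv.ext fun j => ?_⟩
  apply Fin.ext
  rcases lt_trichotomy ((j:ℕ)) m with hj | hj | hj
  · rw [emb_lt _ _ j hj]
    show r + ((σ (Fin.castAdd r (Fin.castSucc (⟨(j:ℕ), hj⟩ : Fin m))) : ℕ) - r) = (σ j : ℕ)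
    rw [show Fin.castAdd r (Fin.castSucc (⟨(j:ℕ), hj⟩ : Fin m)) = j from Fin.ext (by simp)]
    have := hL j hj
    omega
  · rw [emb_eq _ _ j hj]
    rw [show j = (⟨m, by omega⟩ : Fin (m+1+r)) from Fin.ext (by simp [hj])]
    exact htop.symm
  · rw [emb_gt _ _ j hj]
    show (σ (Fin.natAdd (m+1) (⟨(j:ℕ) - (m+1), by have := j.isLt; omega⟩ : Fin r)) : ℕ) = σ j
    rw [show Fin.natAdd (m+1) (⟨(j:ℕ) - (m+1), by have := j.isLt; omega⟩ : Fin r) = j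
      from Fin.ext (by simp; omega)]

end MyAux


namespace MyAux
variable {m r : ℕ}

set_option maxHeartbeats 1000000 in
open scoped Classical in
lemma key (k l m r : ℕ) (hk : 1 ≤ k) :
    (∑ σ : Perm (Fin (m+1+r)), if avoids132 σ ∧ (σ ⟨m, by omega⟩ : ℕ) = m + r
        then Polynomial.X ^ (mmp k 0 l 0 σ) else (0 : Polynomial ℕ))
      = Q m (k-1) 0 l 0 * Q r k 0 l 0 := by
  classical
  rw [Q, Q, Finset.sum_mul_sum]
  have hterm : ∀ (α : Perm (Fin m)) (β : Perm (Fin r)),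
      (if avoids132 α then (Polynomial.X : Polynomial ℕ) ^ (mmp (k-1) 0 l 0 α) else 0) *
        (if avoids132 β then (Polynomial.X : Polynomial ℕ) ^ (mmp k 0 l 0 β) else 0)
      = if avoids132 α ∧ avoids132 β
          then Polynomial.X ^ (mmp (k-1) 0 l 0 α + mmp k 0 l 0 β) else 0 := by
    intro α β
    by_cases h1 : avoids132 α <;> by_cases h2 : avoids132 β <;> simp [h1, h2, pow_add]
  simp only [hterm]
  rw [show (∑ x : Perm (Fin m), ∑ y : Perm (Fin r),
        if avoids132 x ∧ avoids132 y
          then (Polynomial.X : Polynomial ℕ) ^ (mmp (k-1) 0 l 0 x + mmp k 0 l 0 y) else 0)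
      = ∑ p : Perm (Fin m) × Perm (Fin r),
        if avoids132 p.1 ∧ avoids132 p.2
          then (Polynomial.X : Polynomial ℕ) ^ (mmp (k-1) 0 l 0 p.1 + mmp k 0 l 0 p.2) else 0
    from (Fintype.sum_prod_type (f := fun p : Perm (Fin m) × Perm (Fin r) =>
      if avoids132 p.1 ∧ avoids132 p.2
        then (Polynomial.X : Polynomial ℕ) ^ (mmp (k-1) 0 l 0 p.1 + mmp k 0 l 0 p.2)
        else 0)).symm]
  rw [← Finset.sum_filter, ← Finset.sum_filter]
  symm
  refine Finset.sum_bij (fun p _ => emb m r p.1 p.2) ?_ ?_ ?_ ?_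
  · intro p hp
    rw [Finset.mem_filter] at hp ⊢
    exact ⟨Finset.mem_univ _, (avoid_emb p.1 p.2).mpr hp.2, emb_eq p.1 p.2 ⟨m, by omega⟩ rfl⟩
  · intro p1 h1 p2 h2 heq
    have hα : p1.1 = p2.1 := by
      apply Equiv.ext; intro x; apply Fin.ext
      have h := congrArg (fun τ : Perm (Fin (m+1+r)) => ((τ (Fin.castAdd r x.castSucc)) : ℕ)) heq
      simp only [emb_apply_l] at h
      omega
    have hβ : p1.2 = p2.2 := by
      apply Equiv.ext; intro y; apply Fin.ext
      have h := congrArg (fun τ : Perm (Fin (m+1+r)) => ((τ (Fin.natAdd (m+1) y)) : ℕ)) heq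
      simp only [emb_apply_r] at h
      exact h
    exact Prod.ext hα hβ
  · intro σ hσ
    rw [Finset.mem_filter] at hσ
    obtain ⟨-, hav, htop⟩ := hσ
    obtain ⟨α, β, hemb⟩ := exists_emb σ hav htop
    have hav2 := (avoid_emb α β).mp (by rw [hemb]; exact hav)
    exact ⟨(α, β), Finset.mem_filter.mpr ⟨Finset.mem_univ _, hav2⟩, hemb⟩
  · intro p hp
    rw [mmp_emb p.1 p.2 k l hk]

open scoped Classical in
noncomputable def U (n k l p : ℕ) : Polynomial ℕ :=
  ∑ σ : Perm (Fin n),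
    if avoids132 σ ∧ (∃ j : Fin n, (j:ℕ) = p ∧ ((σ j : ℕ) = n - 1))
      then Polynomial.X ^ (mmp k 0 l 0 σ) else 0

lemma split (k l n : ℕ) (hn : 1 ≤ n) :
    (∑ p ∈ Finset.range n, U n k l p) = Q n k 0 l 0 := by
  classical
  unfold U
  rw [Finset.sum_comm, Q]
  refine Finset.sum_congr rfl fun σ _ => ?_
  by_cases hav : avoids132 σ
  · simp only [hav, true_and, if_true]
    have hc : ∀ p : ℕ, ((∃ j : Fin n, (j:ℕ) = p ∧ ((σ j : ℕ) = n - 1))) ↔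
        p = ((σ.symm ⟨n-1, by omega⟩ : Fin n) : ℕ) := by
      intro p
      constructor
      · rintro ⟨j, rfl, hj2⟩
        rw [show (⟨n-1, by omega⟩ : Fin n) = σ j from (Fin.ext hj2).symm,
          Equiv.symm_apply_apply]
      · rintro rfl
        exact ⟨σ.symm ⟨n-1, by omega⟩, rfl, by rw [Equiv.apply_symm_apply]⟩
    simp only [hc]
    rw [Finset.sum_ite_eq' (Finset.range n)]
    rw [if_pos (Finset.mem_range.mpr (Fin.isLt _))]
  · simp [hav]

lemma keyU (k l m r : ℕ) (hk : 1 ≤ k) :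
    U (m+1+r) k l m = Q m (k-1) 0 l 0 * Q r k 0 l 0 := by
  classical
  rw [← key k l m r hk]
  unfold U
  refine Finset.sum_congr rfl fun σ _ => ?_
  refine if_congr (and_congr_right fun _ => ?_) rfl rfl
  constructor
  · rintro ⟨j, hj1, hj2⟩
    rw [show (⟨m, by omega⟩ : Fin (m+1+r)) = j from Fin.ext hj1.symm]
    omega
  · intro h
    exact ⟨⟨m, by omega⟩, rfl, by rw [show (m+1+r) - 1 = m + r by omega]; exact h⟩

end MyAux

end

theorem stmt3 (k l n : ℕ) (hk : 1 ≤ k) (hl : 1 ≤ l) (hn : 1 ≤ n) :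
    Q n k 0 l 0 =
      ∑ i ∈ Finset.Icc 1 n, Q (i - 1) (k - 1) 0 l 0 * Q (n - i) k 0 l 0 := by
  classical
  calc Q n k 0 l 0 = ∑ p ∈ Finset.range n, MyAux.U n k l p := (MyAux.split k l n hn).symm
    _ = ∑ p ∈ Finset.range n, Q p (k-1) 0 l 0 * Q (n-1-p) k 0 l 0 := by
        refine Finset.sum_congr rfl fun p hp => ?_
        have hp' := Finset.mem_range.mp hp
        rw [show MyAux.U n k l p = MyAux.U (p+1+(n-1-p)) k l p by
          rw [← show n = p+1+(n-1-p) by omega]]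
        rw [MyAux.keyU k l p (n-1-p) hk]
    _ = ∑ i ∈ Finset.Icc 1 n, Q (i - 1) (k - 1) 0 l 0 * Q (n - i) k 0 l 0 := by
        rw [show Finset.Icc 1 n = Finset.Ico 1 (n+1) from (Finset.Ico_add_one_right_eq_Icc 1 n).symm]
        rw [Finset.sum_Ico_eq_sum_range]
        simp only [Nat.add_sub_cancel]
        refine Finset.sum_congr rfl fun p hp => ?_
        have hp' := Finset.mem_range.mp hp
        rw [show (1+p) - 1 = p by omega, show n - (1+p) = n-1-p by omega]
end

section
/- For k ≥ 2 and n ≥ 1, the number of 132-avoiding permutations of length n with no match of MMP(k,0,0,0) equals the number of 132-avoiding permutations of length n with no match of MMP(k-1,0,1,0). -/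
open Finset

lemma mmp_eq_zero_iff {n : ℕ} (a b c d : ℕ) (σ : Equiv.Perm (Fin n)) :
    mmp a b c d σ = 0 ↔ ∀ i, ¬ mmpMatch a b c d σ i := by
  rw [mmp, Nat.card_eq_zero, or_iff_left (not_infinite_iff_finite.mpr inferInstance),
    isEmpty_subtype]

lemma key {n : ℕ} (k : ℕ) (hk : 2 ≤ k) (σ : Equiv.Perm (Fin n)) (hσ : avoids132 σ) :
    (∃ i, mmpMatch k 0 0 0 σ i) ↔ ∃ i, mmpMatch (k - 1) 0 1 0 σ i := by
  constructor
  · rintro ⟨i, hA, -, -, -⟩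
    set S := Finset.univ.filter fun j => i < j ∧ σ i < σ j with hS
    have hne : S.Nonempty := Finset.card_pos.mp (lt_of_lt_of_le (by omega) hA)
    set j := S.min' hne with hj
    have hjS : j ∈ S := S.min'_mem hne
    rw [hS, Finset.mem_filter] at hjS
    obtain ⟨-, hij, hvij⟩ := hjS
    refine ⟨j, ?_, Nat.zero_le _, ?_, Nat.zero_le _⟩
    · -- k - 1 right-greaters of j
      have hsub : S.erase j ⊆ Finset.univ.filter fun m => j < m ∧ σ j < σ m := by
        intro m hm
        rw [Finset.mem_erase] at hm
        obtain ⟨hmj, hmS⟩ := hm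
        rw [hS, Finset.mem_filter] at hmS
        obtain ⟨-, him, hvim⟩ := hmS
        have hjm : j ≤ m := S.min'_le m (by rw [hS, Finset.mem_filter]; exact ⟨Finset.mem_univ _, him, hvim⟩)
        have hjm' : j < m := lt_of_le_of_ne hjm (fun h => hmj (h.symm))
        rw [Finset.mem_filter]
        refine ⟨Finset.mem_univ _, hjm', ?_⟩
        by_contra hle
        push_neg at hle
        have hne' : σ m ≠ σ j := fun h => hmj (σ.injective h)
        exact hσ ⟨i, j, m, hij, hjm', hvim, lt_of_le_of_ne hle hne'⟩
      calc k - 1 ≤ S.card - 1 := by omega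
        _ = (S.erase j).card := (Finset.card_erase_of_mem (S.min'_mem hne)).symm
        _ ≤ _ := Finset.card_le_card hsub
    · -- i is a left-smaller of j
      have : i ∈ Finset.univ.filter fun m => m < j ∧ σ m < σ j := by
        rw [Finset.mem_filter]; exact ⟨Finset.mem_univ _, hij, hvij⟩
      calc 1 ≤ ({i} : Finset (Fin n)).card := by simp
        _ ≤ _ := Finset.card_le_card (by simpa using this)
  · rintro ⟨i, hA, -, hC, -⟩
    have hne : (Finset.univ.filter fun j => j < i ∧ σ j < σ i).Nonempty :=
      Finset.card_pos.mp (lt_of_lt_of_le (by omega) hC)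
    obtain ⟨j, hj⟩ := hne
    rw [Finset.mem_filter] at hj
    obtain ⟨-, hji, hvji⟩ := hj
    refine ⟨j, ?_, Nat.zero_le _, Nat.zero_le _, Nat.zero_le _⟩
    have hsub : insert i (Finset.univ.filter fun m => i < m ∧ σ i < σ m) ⊆
        Finset.univ.filter fun m => j < m ∧ σ j < σ m := by
      intro m hm
      rw [Finset.mem_insert] at hm
      rw [Finset.mem_filter]
      rcases hm with rfl | hm
      · exact ⟨Finset.mem_univ _, hji, hvji⟩
      · rw [Finset.mem_filter] at hm
        exact ⟨Finset.mem_univ _, hji.trans hm.2.1, hvji.trans hm.2.2⟩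
    have hcard : k ≤ (insert i (Finset.univ.filter fun m => i < m ∧ σ i < σ m)).card := by
      rw [Finset.card_insert_of_notMem (by simp)]
      omega
    exact hcard.trans (Finset.card_le_card hsub)

theorem stmt4 (k n : ℕ) (hk : 2 ≤ k) (hn : 1 ≤ n) :
    Nat.card {σ : Equiv.Perm (Fin n) // avoids132 σ ∧ mmp k 0 0 0 σ = 0} =
    Nat.card {σ : Equiv.Perm (Fin n) // avoids132 σ ∧ mmp (k - 1) 0 1 0 σ = 0} := by
  refine Nat.card_congr (Equiv.subtypeEquivRight fun σ => ?_)
  refine and_congr_right fun hσ => ?_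
  rw [mmp_eq_zero_iff, mmp_eq_zero_iff]
  rw [← not_exists, ← not_exists, key k hk σ hσ]
end

section
/- For a permutation σ avoiding 132, a position i matches MMP(1,0,2,0) if and only if σ has an occurrence (as a classical pattern) of 2134 or 1234 with σ_i playing the role of the third letter; consequently, σ has no match of MMP(1,0,2,0) if and only if σ avoids both 2134 and 1234. -/
open Finset

/-- σ avoids the classical pattern 2134. -/
def avoids2134 {n : ℕ} (σ : Equiv.Perm (Fin n)) : Prop :=
  ¬ ∃ i1 i2 i3 i4 : Fin n, i1 < i2 ∧ i2 < i3 ∧ i3 < i4 ∧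
      σ i2 < σ i1 ∧ σ i1 < σ i3 ∧ σ i3 < σ i4

/-- σ avoids the classical pattern 1234. -/
def avoids1234 {n : ℕ} (σ : Equiv.Perm (Fin n)) : Prop :=
  ¬ ∃ i1 i2 i3 i4 : Fin n, i1 < i2 ∧ i2 < i3 ∧ i3 < i4 ∧
      σ i1 < σ i2 ∧ σ i2 < σ i3 ∧ σ i3 < σ i4

theorem stmt5 {n : ℕ} (σ : Equiv.Perm (Fin n)) (h : avoids132 σ) :
    (∀ i : Fin n, mmpMatch 1 0 2 0 σ i ↔
      ∃ i1 i2 i4 : Fin n, i1 < i2 ∧ i2 < i ∧ i < i4 ∧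
        ((σ i2 < σ i1 ∧ σ i1 < σ i ∧ σ i < σ i4) ∨
         (σ i1 < σ i2 ∧ σ i2 < σ i ∧ σ i < σ i4))) ∧
    (mmp 1 0 2 0 σ = 0 ↔ avoids2134 σ ∧ avoids1234 σ) := by
  have main : ∀ i : Fin n, mmpMatch 1 0 2 0 σ i ↔
      ∃ i1 i2 i4 : Fin n, i1 < i2 ∧ i2 < i ∧ i < i4 ∧
        ((σ i2 < σ i1 ∧ σ i1 < σ i ∧ σ i < σ i4) ∨
         (σ i1 < σ i2 ∧ σ i2 < σ i ∧ σ i < σ i4)) := by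
    intro i
    constructor
    · rintro ⟨ha, -, hc, -⟩
      rw [Finset.one_le_card] at ha
      obtain ⟨i4, hi4⟩ := ha
      simp only [Finset.mem_filter, Finset.mem_univ, true_and] at hi4
      have hc' : 1 < (Finset.univ.filter fun j => j < i ∧ σ j < σ i).card := hc
      rw [Finset.one_lt_card] at hc'
      obtain ⟨a, ha', b, hb', hab⟩ := hc'
      simp only [Finset.mem_filter, Finset.mem_univ, true_and] at ha' hb'
      have hvne : σ a ≠ σ b := fun e => hab (σ.injective e)
      rcases lt_or_gt_of_ne hab with h1 | h1
      · rcases lt_or_gt_of_ne hvne with h2 | h2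
        · exact ⟨a, b, i4, h1, hb'.1, hi4.1, Or.inr ⟨h2, hb'.2, hi4.2⟩⟩
        · exact ⟨a, b, i4, h1, hb'.1, hi4.1, Or.inl ⟨h2, ha'.2, hi4.2⟩⟩
      · rcases lt_or_gt_of_ne hvne with h2 | h2
        · exact ⟨b, a, i4, h1, ha'.1, hi4.1, Or.inl ⟨h2, hb'.2, hi4.2⟩⟩
        · exact ⟨b, a, i4, h1, ha'.1, hi4.1, Or.inr ⟨h2, ha'.2, hi4.2⟩⟩
    · rintro ⟨i1, i2, i4, h12, h2i, hi4, hcase⟩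
      have hv4 : σ i < σ i4 := by rcases hcase with ⟨-, -, h⟩ | ⟨-, -, h⟩ <;> exact h
      have hv1 : σ i1 < σ i := by
        rcases hcase with ⟨h', h'', -⟩ | ⟨h', h'', -⟩
        · exact h''
        · exact h'.trans h''
      have hv2 : σ i2 < σ i := by
        rcases hcase with ⟨h', h'', -⟩ | ⟨h', h'', -⟩
        · exact h'.trans h''
        · exact h''
      refine ⟨?_, Nat.zero_le _, ?_, Nat.zero_le _⟩
      · rw [Finset.one_le_card]
        exact ⟨i4, by simp [hi4, hv4]⟩
      · have : 1 < (Finset.univ.filter fun j => j < i ∧ σ j < σ i).card :=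
          Finset.one_lt_card.mpr ⟨i1, by simp [h12.trans h2i, hv1], i2,
            by simp [h2i, hv2], ne_of_lt h12⟩
        exact this
  refine ⟨main, ?_⟩
  constructor
  · intro h0
    have hempty : ∀ i : Fin n, ¬ mmpMatch 1 0 2 0 σ i := by
      intro i hi
      have hpos : 0 < Nat.card {i : Fin n // mmpMatch 1 0 2 0 σ i} :=
        @Nat.card_pos _ ⟨⟨i, hi⟩⟩ _
      rw [show Nat.card {i : Fin n // mmpMatch 1 0 2 0 σ i} = mmp 1 0 2 0 σ from rfl,
        h0] at hpos
      exact absurd hpos (lt_irrefl 0)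
    constructor
    · rintro ⟨i1, i2, i3, i4, h12, h23, h34, v21, v13, v34⟩
      exact hempty i3 ((main i3).2 ⟨i1, i2, i4, h12, h23, h34, Or.inl ⟨v21, v13, v34⟩⟩)
    · rintro ⟨i1, i2, i3, i4, h12, h23, h34, v12, v23, v34⟩
      exact hempty i3 ((main i3).2 ⟨i1, i2, i4, h12, h23, h34, Or.inr ⟨v12, v23, v34⟩⟩)
  · rintro ⟨h1, h2⟩
    unfold mmp
    rw [Nat.card_eq_zero]
    left
    constructor
    rintro ⟨i, hi⟩
    obtain ⟨i1, i2, i4, ha, hb, hc, hcase⟩ := (main i).1 hi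
    rcases hcase with ⟨v1, v2, v3⟩ | ⟨v1, v2, v3⟩
    · exact h1 ⟨i1, i2, i, i4, ha, hb, hc, v1, v2, v3⟩
    · exact h2 ⟨i1, i2, i, i4, ha, hb, hc, v1, v2, v3⟩
end

section
/- For k,ℓ ≥ 1 and n ≥ k+ℓ+1, the maximum number of matches of MMP(k,0,ℓ,0) over σ ∈ S_n(132) is n-k-ℓ, and the number of σ ∈ S_n(132) achieving exactly n-k-ℓ matches is the Catalan number C_ℓ. -/
/-!
A position can match MMP(k,0,ℓ,0) only if at least ℓ positions precede it and at least k follow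
it, which leaves n - k - ℓ candidates. If all of them match in a 132-avoider σ, the last candidate
has all k later entries above it, so every position from ℓ on carries a value ≥ ℓ; a descent among
those positions would then form a 132 with the first entry (whose value is below ℓ), so σ is the
identity from ℓ on. The maximizers are thus the 132-avoiders of length ℓ extended by the identity,
and these are counted by C_ℓ through the decomposition σ = (τ ⊕ 1) ⊖ ρ around the position of the
maximum.
-/

open Finset

open Equiv

lemma card_filter_apply_mem {α : Type*} [Fintype α] [DecidableEq α] (σ : Perm α) (V : Finset α) :
    #{x | σ x ∈ V} = #V := by
  rw [← card_map σ.toEmbedding]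
  congr 1
  ext v
  simp

section NatFun

variable {n : ℕ}

-- On `ℕ`, blocks of positions and values of a permutation become linear arithmetic.
def natFun (σ : Perm (Fin n)) (i : ℕ) : ℕ :=
  if h : i < n then σ ⟨i, h⟩ else i

lemma natFun_of_lt (σ : Perm (Fin n)) {i : ℕ} (h : i < n) : natFun σ i = σ ⟨i, h⟩ :=
  dif_pos h

@[simp]
lemma natFun_val (σ : Perm (Fin n)) (i : Fin n) : natFun σ i = σ i :=
  natFun_of_lt σ i.2

lemma natFun_of_le (σ : Perm (Fin n)) {i : ℕ} (h : n ≤ i) : natFun σ i = i :=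
  dif_neg h.not_gt

lemma natFun_lt_iff (σ : Perm (Fin n)) {i : ℕ} : natFun σ i < n ↔ i < n := by
  unfold natFun
  split_ifs with h <;> simp [h]

lemma natFun_injective (σ : Perm (Fin n)) : Function.Injective (natFun σ) := by
  intro i j hij
  have hi := natFun_lt_iff σ (i := i)
  have hj := natFun_lt_iff σ (i := j)
  unfold natFun at hij hi hj
  split_ifs at hij hi hj with h₁ h₂ h₂
  · simpa using σ.injective (Fin.ext hij)
  all_goals omega

lemma ext_of_natFun {σ σ' : Perm (Fin n)} (h : ∀ i < n, natFun σ i = natFun σ' i) : σ = σ' :=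
  Equiv.ext fun i => Fin.ext <| by simpa using h i i.2

noncomputable def ofInjOn (f : ℕ → ℕ) (hf : ∀ i < n, f i < n) (hinj : Set.InjOn f (Set.Iio n)) :
    Perm (Fin n) :=
  Equiv.ofBijective (fun i => ⟨f i, hf i i.2⟩) <| Finite.injective_iff_bijective.1
    fun i j hij => Fin.ext <| hinj i.2 j.2 (congrArg Fin.val hij)

lemma natFun_ofInjOn {f : ℕ → ℕ} (hf : ∀ i < n, f i < n) (hinj : Set.InjOn f (Set.Iio n))
    {i : ℕ} (hi : i < n) : natFun (ofInjOn f hf hinj) i = f i := by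
  simp [natFun_of_lt _ hi, ofInjOn]

lemma avoids132_iff (σ : Perm (Fin n)) : avoids132 σ ↔
    ∀ i j k, i < j → j < k → k < n → ¬ (natFun σ i < natFun σ k ∧ natFun σ k < natFun σ j) := by
  constructor
  · rintro hσ i j k hij hjk hk ⟨h₁, h₂⟩
    rw [natFun_of_lt σ (by omega : i < n), natFun_of_lt σ hk] at h₁
    rw [natFun_of_lt σ hk, natFun_of_lt σ (by omega : j < n)] at h₂
    exact hσ ⟨_, _, _, Fin.mk_lt_mk.2 hij, Fin.mk_lt_mk.2 hjk, h₁, h₂⟩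
  · rintro hσ ⟨i, j, k, hij, hjk, h₁, h₂⟩
    exact hσ i j k hij hjk k.2 ⟨by simpa using h₁, by simpa using h₂⟩

lemma exists_avoids132_block {σ : Perm (Fin n)} (hσ : avoids132 σ) {s t a : ℕ} (hs : s + a ≤ n)
    (hmaps : ∀ x < a, t ≤ natFun σ (s + x) ∧ natFun σ (s + x) < t + a) :
    ∃ τ : Perm (Fin a), avoids132 τ ∧ ∀ x < a, natFun σ (s + x) = t + natFun τ x := by
  have hf : ∀ x < a, natFun σ (s + x) - t < a := fun x hx => by have := hmaps x hx; omega
  have hinj : Set.InjOn (fun x => natFun σ (s + x) - t) (Set.Iio a) := by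
    intro x hx y hy hxy
    have := hmaps x hx
    have := hmaps y hy
    have := (natFun_injective σ).eq_iff (a := s + x) (b := s + y)
    simp only at hxy
    omega
  have hτ : ∀ x < a, natFun σ (s + x) = t + natFun (ofInjOn _ hf hinj) x := fun x hx => by
    rw [natFun_ofInjOn hf hinj hx]
    have := hmaps x hx
    omega
  refine ⟨ofInjOn _ hf hinj, ?_, hτ⟩
  rw [avoids132_iff] at hσ ⊢
  intro i j k hij hjk hk
  have := hσ (s + i) (s + j) (s + k) (by omega) (by omega) (by omega)
  rw [hτ i (by omega), hτ j (by omega), hτ k hk] at this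
  omega

end NatFun

section Glue

variable {m p : ℕ}

def glueFun (m p : ℕ) (f g : ℕ → ℕ) (j : ℕ) : ℕ :=
  if j < p then m - p + f j else if j = p then m else g (j - (p + 1))

variable (τ : Perm (Fin p)) (ρ : Perm (Fin (m - p)))

lemma glueFun_lt (hp : p ≤ m) : ∀ j < m + 1, glueFun m p (natFun τ) (natFun ρ) j < m + 1 := by
  intro j hj
  have := natFun_lt_iff τ (i := j)
  have := natFun_lt_iff ρ (i := j - (p + 1))
  unfold glueFun
  split_ifs <;> omega

lemma glueFun_injOn (hp : p ≤ m) :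
    Set.InjOn (glueFun m p (natFun τ) (natFun ρ)) (Set.Iio (m + 1)) := by
  intro i hi j hj hij
  have := natFun_lt_iff τ (i := i)
  have := natFun_lt_iff τ (i := j)
  have := natFun_lt_iff ρ (i := i - (p + 1))
  have := natFun_lt_iff ρ (i := j - (p + 1))
  have := (natFun_injective τ).eq_iff (a := i) (b := j)
  have := (natFun_injective ρ).eq_iff (a := i - (p + 1)) (b := j - (p + 1))
  simp only [Set.mem_Iio] at hi hj
  unfold glueFun at hij
  split_ifs at hij <;> omega

/-- The skew sum `(τ ⊕ 1) ⊖ ρ`. -/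
noncomputable def glue (hp : p ≤ m) : Perm (Fin (m + 1)) :=
  ofInjOn _ (glueFun_lt τ ρ hp) (glueFun_injOn τ ρ hp)

lemma natFun_glue (hp : p ≤ m) {j : ℕ} (hj : j < m + 1) :
    natFun (glue τ ρ hp) j = glueFun m p (natFun τ) (natFun ρ) j :=
  natFun_ofInjOn _ _ hj

lemma avoids132_glue (hp : p ≤ m) {τ : Perm (Fin p)} {ρ : Perm (Fin (m - p))}
    (hτ : avoids132 τ) (hρ : avoids132 ρ) : avoids132 (glue τ ρ hp) := by
  rw [avoids132_iff] at hτ hρ ⊢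
  intro i j k hij hjk hk
  have := hτ i j k hij hjk
  have := hρ (i - (p + 1)) (j - (p + 1)) (k - (p + 1))
  have := natFun_lt_iff τ (i := i)
  have := natFun_lt_iff τ (i := j)
  have := natFun_lt_iff ρ (i := k - (p + 1))
  rw [natFun_glue _ _ hp (j := i) (by omega), natFun_glue _ _ hp (j := j) (by omega),
    natFun_glue _ _ hp hk]
  unfold glueFun
  split_ifs <;> omega

end Glue

section Catalan

variable {m : ℕ}

noncomputable def glueAvoiders (m : ℕ) :
    (Σ p : Fin (m + 1),
      {τ : Perm (Fin p) // avoids132 τ} × {ρ : Perm (Fin (m - p)) // avoids132 ρ}) →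
      {σ : Perm (Fin (m + 1)) // avoids132 σ} :=
  fun x => ⟨glue x.2.1.1 x.2.2.1 x.1.is_le, avoids132_glue x.1.is_le x.2.1.2 x.2.2.2⟩

lemma glueAvoiders_injective : Function.Injective (glueAvoiders m) := by
  rintro ⟨p, ⟨τ, _⟩, ⟨ρ, _⟩⟩ ⟨q, ⟨τ', _⟩, ⟨ρ', _⟩⟩ h
  have hglue : ∀ j < m + 1, glueFun m p (natFun τ) (natFun ρ) j
      = glueFun m q (natFun τ') (natFun ρ') j := fun j hj => by
    rw [← natFun_glue _ _ p.is_le hj, ← natFun_glue _ _ q.is_le hj]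
    exact congrArg (fun σ : {σ : Perm (Fin (m + 1)) // avoids132 σ} => natFun σ.1 j) h
  obtain rfl : p = q := by
    have := hglue p (by omega)
    have := natFun_lt_iff τ' (i := p)
    have := natFun_lt_iff ρ' (i := p - (q + 1))
    unfold glueFun at *
    ext
    split_ifs at * <;> omega
  have hτ : τ = τ' := ext_of_natFun fun x hx => by
    have := hglue x (by omega)
    simp only [glueFun, if_pos hx] at this
    omega
  have hρ : ρ = ρ' := ext_of_natFun fun x hx => by
    have := hglue (p + 1 + x) (by omega)
    simpa [glueFun, show ¬ p + 1 + x < p by omega, show p + 1 + x ≠ p by omega] using this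
  subst hτ hρ
  rfl

section Maximum

variable {σ : Perm (Fin (m + 1))} {p x y : Fin (m + 1)}

lemma apply_lt_apply_of_apply_eq_last (hp : σ p = Fin.last m) (hy : y ≠ p) : σ y < σ p := by
  rw [hp, Fin.lt_last_iff_ne_last, ← hp]
  exact σ.injective.ne hy

lemma apply_lt_apply_of_lt_of_lt (hp : σ p = Fin.last m) (hσ : avoids132 σ) (hx : x < p) (hy : p < y) : σ y < σ x := by
  by_contra! h
  exact hσ ⟨x, p, y, hx, hy, lt_of_le_of_ne h (σ.injective.ne (hx.trans hy).ne),
    apply_lt_apply_of_apply_eq_last hp hy.ne'⟩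

lemma sub_le_apply_of_lt (hp : σ p = Fin.last m) (hσ : avoids132 σ) (hx : x < p) : m - p ≤ σ x := by
  have := card_le_card (show Ioi p ⊆ univ.filter fun y => σ y ∈ Iio (σ x) from
    fun y hy => by simpa using apply_lt_apply_of_lt_of_lt hp hσ hx (mem_Ioi.1 hy))
  rw [card_filter_apply_mem, Fin.card_Iio, Fin.card_Ioi] at this
  omega

lemma apply_lt_sub_of_lt (hp : σ p = Fin.last m) (hσ : avoids132 σ) (hy : p < y) : σ y < m - p := by
  have := card_le_card (show Iic p ⊆ univ.filter fun x => σ x ∈ Ioi (σ y) from fun x hx => by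
    rcases (mem_Iic.1 hx).lt_or_eq with hx | rfl
    · simpa using apply_lt_apply_of_lt_of_lt hp hσ hx hy
    · simpa using apply_lt_apply_of_apply_eq_last hp hy.ne')
  rw [card_filter_apply_mem, Fin.card_Ioi, Fin.card_Iic] at this
  omega

end Maximum

lemma glueAvoiders_surjective : Function.Surjective (glueAvoiders m) := by
  rintro ⟨σ, hσ⟩
  set p := σ.symm (Fin.last m)
  have hp : σ p = Fin.last m := σ.apply_symm_apply _
  obtain ⟨τ, hτ, hστ⟩ := exists_avoids132_block hσ (s := 0) (t := m - p) (a := p) (by omega)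
    fun x hx => by
      have h₁ := sub_le_apply_of_lt hp hσ (x := ⟨x, by omega⟩) hx
      have h₂ := apply_lt_apply_of_apply_eq_last hp (y := ⟨x, by omega⟩) (Fin.ne_of_lt hx)
      rw [hp, Fin.lt_def, Fin.val_last] at h₂
      rw [zero_add, natFun_of_lt σ (by omega)]
      omega
  obtain ⟨ρ, hρ, hσρ⟩ := exists_avoids132_block hσ (s := p + 1) (t := 0) (a := m - p) (by omega)
    fun x hx => by
      have := apply_lt_sub_of_lt hp hσ (y := ⟨p + 1 + x, by omega⟩)
        (Fin.lt_def.2 (by simp only; omega))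
      rw [natFun_of_lt σ (by omega)]
      omega
  refine ⟨⟨p, ⟨τ, hτ⟩, ⟨ρ, hρ⟩⟩, Subtype.ext <| ext_of_natFun fun j hj => ?_⟩
  change natFun (glue τ ρ p.is_le) j = natFun σ j
  rw [natFun_glue _ _ p.is_le hj]
  unfold glueFun
  split_ifs with h₁ h₂
  · simpa using (hστ j h₁).symm
  · rw [h₂, natFun_val, hp, Fin.val_last]
  · have := hσρ (j - (p + 1)) (by omega)
    rw [show (p : ℕ) + 1 + (j - (p + 1)) = j by omega] at this
    omega

theorem card_avoids132 (m : ℕ) : Nat.card {σ : Perm (Fin m) // avoids132 σ} = catalan m := by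
  induction m using Nat.strong_induction_on with
  | _ m ih =>
    cases m with
    | zero =>
      rw [catalan_zero, Nat.card_eq_one_iff_unique]
      exact ⟨⟨fun _ _ => Subtype.ext (Subsingleton.elim _ _)⟩, ⟨⟨1, fun ⟨i, _⟩ => i.elim0⟩⟩⟩
    | succ m =>
      rw [← Nat.card_congr (Equiv.ofBijective _ ⟨glueAvoiders_injective, glueAvoiders_surjective⟩),
        Nat.card_sigma, catalan_succ]
      refine sum_congr rfl fun p _ => ?_
      rw [Nat.card_prod, ih p (by omega), ih (m - p) (by omega)]

end Catalan

section MeshPatterns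

variable {n a b c d : ℕ} {σ : Perm (Fin n)} {i : Fin n}

lemma mmpMatch.le_val (h : mmpMatch a b c d σ i) : c ≤ i :=
  h.2.2.1.trans <| (card_le_card fun j hj => by simpa using (mem_filter.1 hj).2.1).trans
    (Fin.card_Iio i).le

lemma mmpMatch.val_add_lt (h : mmpMatch a b c d σ i) : i + a < n := by
  have := h.1.trans <| (card_le_card fun j hj => by simpa using (mem_filter.1 hj).2.1).trans
    (Fin.card_Ioi i).le
  omega

lemma mmpMatch.le_apply (h : mmpMatch a b c d σ i) : c ≤ σ i := by
  classical
  refine h.2.2.1.trans <| (card_le_card fun j hj => ?_).trans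
    ((card_filter_apply_mem σ (Iio (σ i))).trans (Fin.card_Iio _)).le
  simpa using (mem_filter.1 hj).2.2

lemma card_filter_window (n a c : ℕ) :
    #{i : Fin n | c ≤ (i : ℕ) ∧ (i : ℕ) + a < n} = n - a - c := by
  rw [← card_map Fin.valEmbedding, ← Nat.card_Ico c (n - a)]
  congr 1
  ext v
  simp only [mem_map, mem_filter, mem_univ, true_and, Fin.valEmbedding_apply, mem_Ico]
  exact ⟨by rintro ⟨i, hi, rfl⟩; omega, fun hv => ⟨⟨v, by omega⟩, by simp only; omega, rfl⟩⟩

lemma mmp_eq_card [DecidablePred (mmpMatch a b c d σ)] :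
    mmp a b c d σ = #{i | mmpMatch a b c d σ i} := by
  rw [mmp, Nat.card_eq_fintype_card, Fintype.card_subtype]

lemma filter_mmpMatch_subset (a b c d : ℕ) (σ : Perm (Fin n))
    [DecidablePred (mmpMatch a b c d σ)] :
    ({i | mmpMatch a b c d σ i} : Finset (Fin n)) ⊆
      ({i | c ≤ (i : ℕ) ∧ (i : ℕ) + a < n} : Finset (Fin n)) :=
  fun i hi => by simpa using And.intro (mem_filter.1 hi).2.le_val (mem_filter.1 hi).2.val_add_lt

lemma mmp_le (a b c d : ℕ) (σ : Perm (Fin n)) : mmp a b c d σ ≤ n - a - c := by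
  classical
  rw [mmp_eq_card, ← card_filter_window n a c]
  exact card_le_card (filter_mmpMatch_subset a b c d σ)

lemma mmpMatch_of_mmp_eq (h : mmp a b c d σ = n - a - c) (hc : c ≤ i) (ha : i + a < n) :
    mmpMatch a b c d σ i := by
  classical
  rw [mmp_eq_card, ← card_filter_window n a c] at h
  have hwindow : i ∈ ({i | c ≤ (i : ℕ) ∧ (i : ℕ) + a < n} : Finset (Fin n)) := by simp [hc, ha]
  rw [← eq_of_subset_of_card_le (filter_mmpMatch_subset a b c d σ) h.ge] at hwindow
  exact (mem_filter.1 hwindow).2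

lemma mmp_eq_of_lt_iff (h : ∀ i : Fin n, c ≤ i → ∀ j, σ j < σ i ↔ j < i) :
    mmp a 0 c 0 σ = n - a - c := by
  classical
  refine (mmp_le a 0 c 0 σ).antisymm ?_
  rw [mmp_eq_card, ← card_filter_window n a c]
  refine card_le_card fun i hi => ?_
  obtain ⟨hc, ha⟩ := (mem_filter.1 hi).2
  have hafter : ({j | i < j ∧ σ i < σ j} : Finset (Fin n)) = Ioi i := by
    ext j
    simp only [mem_filter, mem_univ, true_and, mem_Ioi, and_iff_left_iff_imp]
    exact fun hij => (h j (hc.trans hij.le) i).2 hij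
  have hbefore : ({j | j < i ∧ σ j < σ i} : Finset (Fin n)) = Iio i := by
    ext j
    simp only [mem_filter, mem_univ, true_and, mem_Iio, and_iff_left_iff_imp]
    exact (h i hc j).2
  refine mem_filter.2 ⟨mem_univ i, ?_, Nat.zero_le _, ?_, Nat.zero_le _⟩
  · rw [hafter, Fin.card_Ioi]; omega
  · rw [hbefore, Fin.card_Iio]; exact hc

end MeshPatterns

section Maximizers

variable {n k l : ℕ} {σ : Perm (Fin n)}

lemma apply_lt_of_forall_le_apply (h : ∀ j : Fin n, l ≤ j → l ≤ σ j) {j : Fin n} (hj : j < l) :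
    σ j < l := by
  classical
  set A : Finset (Fin n) := {j | l ≤ (j : ℕ)}
  have hA : A = ({j | σ j ∈ A} : Finset (Fin n)) := eq_of_subset_of_card_le
    (fun j hj => by simpa [A] using h j (by simpa [A] using hj)) (card_filter_apply_mem σ A).le
  by_contra! hσj
  have : j ∈ A := hA ▸ by simpa [A] using hσj
  simp [A] at this
  omega

lemma lt_iff_of_forall_le_apply (hσ : avoids132 σ) (hl : 1 ≤ l)
    (h : ∀ j : Fin n, l ≤ j → l ≤ σ j) : ∀ i : Fin n, l ≤ i → ∀ j, σ j < σ i ↔ j < i := by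
  have hmono : ∀ y w : Fin n, l ≤ y → y < w → σ y < σ w := by
    intro y w hy hyw
    by_contra! hwy
    have h₀ := apply_lt_of_forall_le_apply h (j := ⟨0, by omega⟩) (by simp only; omega)
    have hw := h w (by have := Fin.lt_def.1 hyw; omega)
    exact hσ ⟨⟨0, by omega⟩, y, w, Fin.lt_def.2 (by simp only; omega), hyw,
      Fin.lt_def.2 (by omega), lt_of_le_of_ne hwy (σ.injective.ne hyw.ne')⟩
  intro i hi j
  constructor
  · intro hji
    by_contra! hij
    rcases hij.lt_or_eq with hij | rfl
    · exact (hmono i j hi hij).not_gt hji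
    · exact hji.false
  · intro hij
    by_cases hj : l ≤ (j : ℕ)
    · exact hmono j i hj hij
    · exact Fin.lt_def.2 ((apply_lt_of_forall_le_apply h (not_le.1 hj)).trans_le (h i hi))

lemma le_apply_of_forall_mmpMatch {b d : ℕ} (hn : k + l + 1 ≤ n)
    (hall : ∀ i : Fin n, l ≤ i → i + k < n → mmpMatch k b l d σ i) :
    ∀ j : Fin n, l ≤ j → l ≤ σ j := by
  set z : Fin n := ⟨n - k - 1, by omega⟩
  have hz := hall z (by simp only [z]; omega) (by simp only [z]; omega)
  -- exactly `k` positions follow `z`, so all of them carry larger values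
  have hafter : ({j | z < j ∧ σ z < σ j} : Finset (Fin n)) = Ioi z :=
    eq_of_subset_of_card_le (fun j hj => by simpa using (mem_filter.1 hj).2.1)
      (by rw [Fin.card_Ioi]; exact (Nat.le_of_eq (by simp only [z]; omega)).trans hz.1)
  intro j hj
  by_cases hjk : j + k < n
  · exact (hall j hj hjk).le_apply
  · have hzj : z < j := Fin.lt_def.2 (by simp only [z]; omega)
    have := (mem_filter.1 (hafter ▸ mem_Ioi.2 hzj)).2.2
    exact hz.le_apply.trans (Fin.lt_def.1 this).le

lemma forall_apply_eq_self_iff_lt_iff :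
    (∀ i : Fin n, l ≤ i → σ i = i) ↔ ∀ i : Fin n, l ≤ i → ∀ j, σ j < σ i ↔ j < i := by
  constructor
  · intro h i hi j
    rw [h i hi]
    by_cases hj : l ≤ (j : ℕ)
    · rw [h j hj]
    · have := apply_lt_of_forall_le_apply (fun i hi => (h i hi).symm ▸ hi) (not_le.1 hj)
      simp only [Fin.lt_def]
      omega
  · intro h i hi
    have := card_filter_apply_mem σ (Iio (σ i))
    rw [Fin.card_Iio, show ({j | σ j ∈ Iio (σ i)} : Finset (Fin n)) = Iio i by
      ext j; simpa using h i hi j, Fin.card_Iio] at this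
    exact Fin.ext this.symm

theorem mmp_eq_iff_forall_apply_eq_self (hσ : avoids132 σ) (hl : 1 ≤ l) (hn : k + l + 1 ≤ n) :
    mmp k 0 l 0 σ = n - k - l ↔ ∀ i : Fin n, l ≤ i → σ i = i := by
  rw [forall_apply_eq_self_iff_lt_iff]
  exact ⟨fun h => lt_iff_of_forall_le_apply hσ hl <|
    le_apply_of_forall_mmpMatch hn fun _ => mmpMatch_of_mmp_eq h, mmp_eq_of_lt_iff⟩

end Maximizers

section Extension

variable {l n : ℕ}

lemma forall_natFun_eq_self_iff (σ : Perm (Fin n)) :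
    (∀ i : Fin n, l ≤ i → σ i = i) ↔ ∀ i, l ≤ i → natFun σ i = i := by
  constructor
  · intro h i hi
    by_cases hin : i < n
    · simpa [natFun_of_lt σ hin] using congrArg Fin.val (h ⟨i, hin⟩ hi)
    · exact natFun_of_le σ (not_lt.1 hin)
  · exact fun h i hi => Fin.ext <| by simpa using h i hi

noncomputable def extendPerm (hln : l ≤ n) (τ : Perm (Fin l)) : Perm (Fin n) :=
  ofInjOn (natFun τ)
    (fun i hi => by
      have := natFun_lt_iff τ (i := i)
      have := natFun_of_le τ (i := i)
      omega)
    (natFun_injective τ).injOn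

lemma natFun_extendPerm (hln : l ≤ n) (τ : Perm (Fin l)) (i : ℕ) :
    natFun (extendPerm hln τ) i = natFun τ i := by
  by_cases hi : i < n
  · exact natFun_ofInjOn _ _ hi
  · rw [natFun_of_le _ (not_lt.1 hi), natFun_of_le τ (by omega)]

lemma avoids132_extendPerm (hln : l ≤ n) {τ : Perm (Fin l)} (hτ : avoids132 τ) :
    avoids132 (extendPerm hln τ) := by
  rw [avoids132_iff] at hτ ⊢
  intro i j k hij hjk hk
  simp only [natFun_extendPerm]
  have := hτ i j k hij hjk
  have := natFun_lt_iff τ (i := j)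
  have := natFun_of_le τ (i := j)
  have := natFun_of_le τ (i := k)
  omega

theorem card_avoids132_fixing (hln : l ≤ n) :
    Nat.card {σ : Perm (Fin n) // avoids132 σ ∧ ∀ i : Fin n, l ≤ i → σ i = i} = catalan l := by
  let F : {τ : Perm (Fin l) // avoids132 τ} →
      {σ : Perm (Fin n) // avoids132 σ ∧ ∀ i : Fin n, l ≤ i → σ i = i} := fun τ =>
    ⟨extendPerm hln τ, avoids132_extendPerm hln τ.2, (forall_natFun_eq_self_iff _).2 fun i hi => by
      rw [natFun_extendPerm, natFun_of_le _ hi]⟩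
  have hF : Function.Bijective F := by
    refine ⟨fun τ τ' h => Subtype.ext <| ext_of_natFun fun i _ => ?_, ?_⟩
    · have := congrArg (fun σ => natFun σ.1 i) h
      simpa only [F, natFun_extendPerm] using this
    · rintro ⟨σ, hσ, hfix⟩
      rw [forall_natFun_eq_self_iff] at hfix
      obtain ⟨τ, hτ, hστ⟩ := exists_avoids132_block hσ (s := 0) (t := 0) (a := l) (by omega)
        fun x hx => by
          have := (natFun_injective σ).eq_iff (a := natFun σ x) (b := x)
          have := hfix (natFun σ x)
          simp only [zero_add]
          omega
      refine ⟨⟨τ, hτ⟩, Subtype.ext <| ext_of_natFun fun i _ => ?_⟩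
      change natFun (extendPerm hln τ) i = natFun σ i
      rw [natFun_extendPerm]
      by_cases hi : i < l
      · simpa using (hστ i hi).symm
      · rw [natFun_of_le τ (not_lt.1 hi), hfix i (not_lt.1 hi)]
  rw [← Nat.card_congr (Equiv.ofBijective F hF), card_avoids132]

end Extension

theorem stmt8_general (k l n : ℕ) (hl : 1 ≤ l) (hn : k + l + 1 ≤ n) :
    (∀ σ : Equiv.Perm (Fin n), avoids132 σ → mmp k 0 l 0 σ ≤ n - k - l) ∧
    Nat.card {σ : Equiv.Perm (Fin n) // avoids132 σ ∧ mmp k 0 l 0 σ = n - k - l} =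
      catalan l := by
  refine ⟨fun σ _ => mmp_le k 0 l 0 σ, ?_⟩
  rw [← card_avoids132_fixing (by omega : l ≤ n)]
  exact Nat.card_congr <| Equiv.subtypeEquivRight fun σ =>
    and_congr_right fun hσ => mmp_eq_iff_forall_apply_eq_self hσ hl hn

theorem stmt8 (k l n : ℕ) (hk : 1 ≤ k) (hl : 1 ≤ l) (hn : k + l + 1 ≤ n) :
    (∀ σ : Equiv.Perm (Fin n), avoids132 σ → mmp k 0 l 0 σ ≤ n - k - l) ∧
    Nat.card {σ : Equiv.Perm (Fin n) // avoids132 σ ∧ mmp k 0 l 0 σ = n - k - l} =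
      catalan l :=
  stmt8_general k l n hl hn
end

section
/- For n ≥ 4, the number of 132-avoiding permutations of length n with exactly n-3 matches of MMP(1,0,1,0) is 2 + binom(n-1, 2). -/
open Finset

set_option maxHeartbeats 1000000

section Aux
variable {n : ℕ}

/-- rotate [0, k+m) by k, as a function on ℕ. -/
def ffun (k m x : ℕ) : ℕ :=
  if x < m then k + x else if x < k + m then x - m else x

lemma ffun_lt (k m x : ℕ) (h : k + m ≤ n) (hx : x < n) : ffun k m x < n := by
  unfold ffun; split_ifs <;> omega

lemma ffun_inv (k m x : ℕ) : ffun m k (ffun k m x) = x := by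
  unfold ffun; split_ifs <;> omega

def F (n k m : ℕ) : Equiv.Perm (Fin n) :=
  if h : k + m ≤ n then
    { toFun := fun i => ⟨ffun k m i, ffun_lt k m i h i.isLt⟩
      invFun := fun i => ⟨ffun m k i, ffun_lt m k i (by omega) i.isLt⟩
      left_inv := fun i => Fin.ext (ffun_inv k m i)
      right_inv := fun i => Fin.ext (ffun_inv m k i) }
  else 1

lemma F_val {k m : ℕ} (h : k + m ≤ n) (i : Fin n) :
    ((F n k m) i : ℕ) = ffun k m i := by
  rw [F, dif_pos h]; rfl

def G (σ : Equiv.Perm (Fin n)) (i : Fin n) : Prop :=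
  (∃ j, i < j ∧ σ i < σ j) ∧ (∃ j, j < i ∧ σ j < σ i)

instance (σ : Equiv.Perm (Fin n)) : DecidablePred (G σ) := fun _ =>
  decidable_of_iff ((∃ j, _ < j ∧ _ < σ j) ∧ (∃ j, j < _ ∧ σ j < _)) Iff.rfl

lemma mmpMatch_iff (σ : Equiv.Perm (Fin n)) (i : Fin n) :
    mmpMatch 1 0 1 0 σ i ↔ G σ i := by
  unfold mmpMatch G
  simp only [Nat.zero_le, true_and, and_true, Nat.succ_le_iff, Finset.card_pos,
    Finset.filter_nonempty_iff, mem_univ, true_and]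

lemma mmp_eq_card_s9 (σ : Equiv.Perm (Fin n)) :
    mmp 1 0 1 0 σ = (univ.filter fun i => G σ i).card := by
  classical
  rw [mmp, Nat.card_eq_fintype_card, Fintype.card_subtype]
  congr 1
  exact Finset.filter_congr (fun i _ => by rw [mmpMatch_iff])

lemma card_G_add_notG (σ : Equiv.Perm (Fin n)) :
    (univ.filter fun i => G σ i).card + (univ.filter fun i => ¬ G σ i).card = n := by
  rw [Finset.card_filter_add_card_filter_not, Finset.card_univ, Fintype.card_fin]

lemma card_three {α : Type*} [DecidableEq α] {a b c : α} (hab : a ≠ b) (hac : a ≠ c)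
    (hbc : b ≠ c) : ({a, b, c} : Finset α).card = 3 := by
  rw [Finset.card_insert_of_notMem (by simp [hab, hac]),
    Finset.card_insert_of_notMem (by simp [hbc]), Finset.card_singleton]

lemma card_four {α : Type*} [DecidableEq α] {a b c d : α} (hab : a ≠ b) (hac : a ≠ c)
    (had : a ≠ d) (hbc : b ≠ c) (hbd : b ≠ d) (hcd : c ≠ d) :
    ({a, b, c, d} : Finset α).card = 4 := by
  rw [Finset.card_insert_of_notMem (by simp [hab, hac, had]),
    Finset.card_insert_of_notMem (by simp [hbc, hbd]),
    Finset.card_insert_of_notMem (by simp [hcd]), Finset.card_singleton]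

/-! ### Forward direction -/

lemma F_avoids (k m : ℕ) (h : k + m ≤ n) : avoids132 (F n k m) := by
  rintro ⟨i, j, l, hij, hjl, h1, h2⟩
  rw [Fin.lt_def] at hij hjl h1 h2
  rw [F_val h, F_val h] at h1 h2
  unfold ffun at h1 h2
  split_ifs at h1 h2 <;> omega

lemma G_F_iff (k m : ℕ) (hk : 0 < k) (hm : 0 < m) (h : k + m ≤ n) (hn : 4 ≤ n) (i : Fin n) :
    G (F n k m) i ↔
      (0 < (i : ℕ) ∧ (i : ℕ) ≠ m ∧ (i : ℕ) < n - 1 ∧ ¬(k + m = n ∧ (i : ℕ) = m - 1)) := by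
  constructor
  · rintro ⟨⟨j1, hj1, hv1⟩, ⟨j2, hj2, hv2⟩⟩
    rw [Fin.lt_def] at hj1 hj2 hv1 hv2
    rw [F_val h, F_val h] at hv1 hv2
    have hb1 := j1.isLt
    have hb2 := j2.isLt
    have hbi := i.isLt
    refine ⟨by omega, ?_, by omega, ?_⟩
    · intro him
      unfold ffun at hv2
      split_ifs at hv2 <;> omega
    · rintro ⟨hkm, him⟩
      unfold ffun at hv1
      split_ifs at hv1 <;> omega
  · rintro ⟨h1, h2, h3, h4⟩
    have hbi := i.isLt
    constructor
    · by_cases hc : k + m ≤ n - 1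
      · refine ⟨⟨n - 1, by omega⟩, ?_, ?_⟩
        · rw [Fin.lt_def]; simpa using h3
        · rw [Fin.lt_def, F_val h, F_val h]
          unfold ffun; simp only [Fin.val_mk]
          split_ifs <;> omega
      · refine ⟨⟨(i : ℕ) + 1, by omega⟩, ?_, ?_⟩
        · rw [Fin.lt_def]; simp
        · rw [Fin.lt_def, F_val h, F_val h]
          unfold ffun; simp only [Fin.val_mk]
          split_ifs <;> omega
    · by_cases him : (i : ℕ) < m
      · refine ⟨⟨0, by omega⟩, ?_, ?_⟩
        · rw [Fin.lt_def]; simpa using h1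
        · rw [Fin.lt_def, F_val h, F_val h]
          unfold ffun; simp only [Fin.val_mk]
          split_ifs <;> omega
      · refine ⟨⟨m, by omega⟩, ?_, ?_⟩
        · rw [Fin.lt_def]; simp only [Fin.val_mk]; omega
        · rw [Fin.lt_def, F_val h, F_val h]
          unfold ffun; simp only [Fin.val_mk]
          split_ifs <;> omega

lemma notG_F_card (k m : ℕ) (hk : 0 < k) (hm : 0 < m) (h : k + m ≤ n)
    (hT : k + m ≤ n - 1 ∨ k = 1 ∨ m = 1) (hn : 4 ≤ n) :
    (univ.filter fun i => ¬ G (F n k m) i).card = 3 := by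
  by_cases hc : k + m = n ∧ m = n - 1
  · have hset : (univ.filter fun i => ¬ G (F n k m) i) =
        {(⟨0, by omega⟩ : Fin n), ⟨n - 2, by omega⟩, ⟨n - 1, by omega⟩} := by
      ext i
      have hbi := i.isLt
      simp only [mem_filter, mem_univ, true_and, G_F_iff k m hk hm h hn, mem_insert,
        mem_singleton, Fin.ext_iff, Fin.val_mk]
      have hk1 : k = 1 := by omega
      constructor
      · intro hh; omega
      · intro hh; omega
    rw [hset]
    exact card_three (by simp [Fin.ext_iff]; omega) (by simp [Fin.ext_iff]; omega)
      (by simp [Fin.ext_iff]; omega)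
  · have hset : (univ.filter fun i => ¬ G (F n k m) i) =
        {(⟨0, by omega⟩ : Fin n), ⟨m, by omega⟩, ⟨n - 1, by omega⟩} := by
      ext i
      have hbi := i.isLt
      simp only [mem_filter, mem_univ, true_and, G_F_iff k m hk hm h hn, mem_insert,
        mem_singleton, Fin.ext_iff, Fin.val_mk]
      constructor
      · intro hh; omega
      · intro hh; omega
    rw [hset]
    have hmn : m < n - 1 := by omega
    exact card_three (by simp [Fin.ext_iff]; omega) (by simp [Fin.ext_iff]; omega)
      (by simp [Fin.ext_iff]; omega)

end Aux


section Rev2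

variable {n : ℕ}

lemma reverse (hn : 4 ≤ n) (σ : Equiv.Perm (Fin n)) (h132 : avoids132 σ)
    (hN3 : (univ.filter fun i => ¬ G σ i).card = 3) :
    ∃ k m : ℕ, 0 < k ∧ 0 < m ∧ k + m ≤ n ∧ (k + m ≤ n - 1 ∨ k = 1 ∨ m = 1) ∧ σ = F n k m := by
  classical
  set N := univ.filter fun i => ¬ G σ i with hNdef
  set z : Fin n := ⟨0, by omega⟩ with hz
  set l : Fin n := ⟨n - 1, by omega⟩ with hl
  set M : Fin n := σ.symm z with hM
  have hσM : σ M = z := σ.apply_symm_apply z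
  have inj : ∀ a b : Fin n, ((σ a : Fin n) : ℕ) = ((σ b : Fin n) : ℕ) → a = b :=
    fun a b hab => σ.injective (Fin.ext hab)
  -- membership basics
  have hzN : z ∈ N := by
    rw [hNdef, mem_filter]
    refine ⟨mem_univ _, fun hG => ?_⟩
    obtain ⟨_, j, hj, _⟩ := hG
    rw [Fin.lt_def] at hj
    simp [hz] at hj
  have hlN : l ∈ N := by
    rw [hNdef, mem_filter]
    refine ⟨mem_univ _, fun hG => ?_⟩
    obtain ⟨⟨j, hj, _⟩, _⟩ := hG
    rw [Fin.lt_def] at hj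
    have := j.isLt
    simp [hl] at hj
    omega
  have hMN : M ∈ N := by
    rw [hNdef, mem_filter]
    refine ⟨mem_univ _, fun hG => ?_⟩
    obtain ⟨_, j, hj, hv⟩ := hG
    rw [Fin.lt_def] at hv
    rw [hσM] at hv
    simp [hz] at hv
  -- σ 0 ≠ 0
  have hknz : ((σ z : Fin n) : ℕ) ≠ 0 := by
    intro h0
    have hσz : σ z = z := Fin.ext (by simpa [hz] using h0)
    have incr : ∀ a b : Fin n, a < b → ((σ a : Fin n) : ℕ) < ((σ b : Fin n) : ℕ) := by
      intro a b hab
      have hne : ((σ a : Fin n) : ℕ) ≠ ((σ b : Fin n) : ℕ) := by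
        intro he; exact absurd (inj a b he) (ne_of_lt hab)
      rcases Nat.eq_zero_or_pos (a : ℕ) with ha | ha
      · have haz : a = z := Fin.ext (by simpa [hz] using ha)
        have hbz : b ≠ z := by
          intro hbe; rw [haz, hbe] at hab; exact lt_irrefl _ hab
        have : σ b ≠ z := by
          intro he; exact hbz (by rw [← hσz] at he; exact σ.injective he)
        have : ((σ b : Fin n) : ℕ) ≠ 0 := fun hb0 => this (Fin.ext (by simpa [hz] using hb0))
        rw [haz, hσz]
        simp only [hz, Fin.val_mk]
        omega
      · by_contra hle
        have hgt : ((σ b : Fin n) : ℕ) < ((σ a : Fin n) : ℕ) := by omega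
        have hbz : ((σ b : Fin n) : ℕ) ≠ 0 := by
          intro hb0
          have : σ b = z := Fin.ext (by simpa [hz] using hb0)
          have : b = z := by rw [← hσz] at this; exact σ.injective this
          rw [this] at hab
          rw [Fin.lt_def] at hab
          simp [hz] at hab
        refine h132 ⟨z, a, b, ?_, hab, ?_, ?_⟩
        · rw [Fin.lt_def]; simpa [hz] using ha
        · rw [Fin.lt_def, hσz]; simp [hz]; omega
        · rw [Fin.lt_def]; exact hgt
    have hsub : N ⊆ {z, l} := by
      intro i hi
      rw [hNdef, mem_filter] at hi
      simp only [mem_insert, mem_singleton]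
      by_contra hcon
      push_neg at hcon
      obtain ⟨hiz, hil⟩ := hcon
      refine hi.2 ⟨⟨⟨(i : ℕ) + 1, ?_⟩, ?_, ?_⟩, ⟨z, ?_, ?_⟩⟩
      · have := i.isLt
        have : (i : ℕ) ≠ n - 1 := fun he => hil (Fin.ext (by simpa [hl] using he))
        omega
      · rw [Fin.lt_def]; simp
      · exact incr _ _ (by rw [Fin.lt_def]; simp)
      · rw [Fin.lt_def]
        have : (i : ℕ) ≠ 0 := fun he => hiz (Fin.ext (by simpa [hz] using he))
        simp [hz]; omega
      · refine incr _ _ ?_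
        rw [Fin.lt_def]
        have : (i : ℕ) ≠ 0 := fun he => hiz (Fin.ext (by simpa [hz] using he))
        simp [hz]; omega
    have hcard : N.card ≤ 2 := le_trans (Finset.card_le_card hsub)
      (le_trans (Finset.card_insert_le _ _) (by simp))
    omega
  set k : ℕ := ((σ z : Fin n) : ℕ) with hk
  set m : ℕ := (M : ℕ) with hm
  have hk1 : 1 ≤ k := by omega
  have hm1 : 1 ≤ m := by
    rcases Nat.eq_zero_or_pos m with h0 | h; swap; · exact h
    exfalso
    have hMz : M = z := Fin.ext (by simpa [hz, hm] using h0)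
    exact hknz (by rw [hk, ← hMz, hσM])
  have hzM : z ≠ M := by
    intro he
    have : m = 0 := by rw [hm, ← he]
    omega
  have hzl : z ≠ l := by simp [hz, hl, Fin.ext_iff]; omega
  -- the two 132-consequences
  have lem_ii : ∀ a b : Fin n, 0 < (a : ℕ) → (a : ℕ) < (b : ℕ) →
      ¬(k < ((σ b : Fin n) : ℕ) ∧ ((σ b : Fin n) : ℕ) < ((σ a : Fin n) : ℕ)) := by
    rintro a b ha hab ⟨h1, h2⟩
    refine h132 ⟨z, a, b, ?_, ?_, ?_, ?_⟩
    · rw [Fin.lt_def]; simpa [hz] using ha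
    · rw [Fin.lt_def]; exact hab
    · rw [Fin.lt_def]; exact h1
    · rw [Fin.lt_def]; exact h2
  have lem_star : ∀ a b : Fin n, m < (a : ℕ) → (a : ℕ) < (b : ℕ) →
      ((σ a : Fin n) : ℕ) < ((σ b : Fin n) : ℕ) := by
    intro a b ha hab
    have hbM : b ≠ M := by
      intro he
      rw [he] at hab; rw [hm] at ha; omega
    have hb0 : 0 < ((σ b : Fin n) : ℕ) := by
      rcases Nat.eq_zero_or_pos ((σ b : Fin n) : ℕ) with h0 | h; swap; · exact h
      exfalso
      have : σ b = z := Fin.ext (by simpa [hz] using h0)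
      rw [← hσM] at this
      exact hbM (σ.injective this)
    have hne : ((σ a : Fin n) : ℕ) ≠ ((σ b : Fin n) : ℕ) := by
      intro he
      have h' := inj a b he
      have : (a : ℕ) = (b : ℕ) := by rw [h']
      omega
    by_contra hcon
    refine h132 ⟨M, a, b, ?_, ?_, ?_, ?_⟩
    · rw [Fin.lt_def]; simpa [hm] using ha
    · rw [Fin.lt_def]; exact hab
    · rw [Fin.lt_def, hσM]; simpa [hz] using hb0
    · rw [Fin.lt_def]; omega
  -- LR minima are only at positions z and M
  have hLR : ∀ i : Fin n, i ≠ z → i ≠ M → ∃ j : Fin n, j < i ∧ σ j < σ i := by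
    intro i hiz hiM
    by_contra hno
    push_neg at hno
    have hiN : i ∈ N := by
      rw [hNdef, mem_filter]
      refine ⟨mem_univ _, fun hG => ?_⟩
      obtain ⟨_, j, hj, hv⟩ := hG
      exact absurd hv (not_lt.mpr (hno j hj))
    have hi0 : 0 < (i : ℕ) := by
      rcases Nat.eq_zero_or_pos (i : ℕ) with h0 | h
      · exact absurd (Fin.ext (by simpa [hz] using h0) : i = z) hiz
      · exact h
    have hσinz : ((σ i : Fin n) : ℕ) ≠ 0 := by
      intro h0
      have : σ i = z := Fin.ext (by simpa [hz] using h0)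
      rw [← hσM] at this
      exact hiM (σ.injective this)
    have hil : i ≠ l := by
      intro he
      have hMi : (M : ℕ) ≠ (i : ℕ) := by
        intro hh; exact hiM (Fin.ext hh).symm
      have hMlt : M < i := by
        rw [Fin.lt_def]
        have h1 := M.isLt
        have h2 : (i : ℕ) = n - 1 := by rw [he]
        omega
      refine absurd ?_ (not_lt.mpr (hno M hMlt))
      rw [Fin.lt_def, hσM]
      simp only [hz, Fin.val_mk]
      omega
    by_cases hMl : M = l
    · -- value 0 is at the last position
      have hNeq : N = {z, l, i} := by
        refine (Finset.eq_of_subset_of_card_le ?_ ?_).symm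
        · intro x hx
          simp only [mem_insert, mem_singleton] at hx
          rcases hx with rfl | rfl | rfl
          · exact hzN
          · exact hlN
          · exact hiN
        · rw [hN3, card_three hzl (fun hh => hiz hh.symm) (fun hh => hil hh.symm)]
      have hql : σ (σ.symm l) = l := σ.apply_symm_apply l
      have hqN : σ.symm l ∈ N := by
        rw [hNdef, mem_filter]
        refine ⟨mem_univ _, fun hG => ?_⟩
        obtain ⟨⟨j, hj, hv⟩, _⟩ := hG
        rw [Fin.lt_def, hql] at hv
        have := (σ j).isLt
        simp only [hl, Fin.val_mk] at hv
        omega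
      rw [hNeq] at hqN
      simp only [mem_insert, mem_singleton] at hqN
      have hσl : σ l = z := by rw [← hMl]; exact hσM
      rcases hqN with hq | hq | hq
      · -- σ z = l
        have hσz2 : σ z = l := by rw [← hql, hq]
        have h1N : (⟨1, by omega⟩ : Fin n) ∈ N := by
          rw [hNdef, mem_filter]
          refine ⟨mem_univ _, fun hG => ?_⟩
          obtain ⟨_, j, hj, hv⟩ := hG
          rw [Fin.lt_def] at hj hv
          simp only [Fin.val_mk] at hj
          have hjz : j = z := Fin.ext (by simp only [hz, Fin.val_mk]; omega)
          rw [hjz, hσz2] at hv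
          have := (σ (⟨1, by omega⟩ : Fin n)).isLt
          simp only [hl, Fin.val_mk] at hv
          omega
        rw [hNeq] at h1N
        simp only [mem_insert, mem_singleton] at h1N
        have hi1 : (i : ℕ) = 1 := by
          rcases h1N with hh | hh | hh
          · exfalso; rw [Fin.ext_iff] at hh; simp [hz] at hh
          · exfalso; rw [Fin.ext_iff] at hh; simp [hl] at hh; omega
          · rw [← hh]
        have h2N : (⟨n - 2, by omega⟩ : Fin n) ∈ N := by
          rw [hNdef, mem_filter]
          refine ⟨mem_univ _, fun hG => ?_⟩
          obtain ⟨⟨j, hj, hv⟩, _⟩ := hG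
          rw [Fin.lt_def] at hj hv
          simp only [Fin.val_mk] at hj
          have hjl : j = l := Fin.ext (by simp only [hl, Fin.val_mk]; have := j.isLt; omega)
          rw [hjl, hσl] at hv
          simp only [hz, Fin.val_mk] at hv
          omega
        rw [hNeq] at h2N
        simp only [mem_insert, mem_singleton, Fin.ext_iff] at h2N
        simp only [hz, hl, Fin.val_mk, hi1] at h2N
        omega
      · -- σ l = l
        exfalso
        have h5 : σ l = l := by
          have h6 := congrArg σ hq
          rw [hql] at h6
          exact h6.symm
        rw [h5] at hσl
        exact hzl hσl.symm
      · -- σ i = l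
        have hσi : σ i = l := by rw [← hql, hq]
        refine absurd ?_ (not_lt.mpr (hno z (by rw [Fin.lt_def]; simp only [hz, Fin.val_mk]; omega)))
        rw [Fin.lt_def, hσi]
        have h1 := (σ z).isLt
        have h2 : ((σ z : Fin n) : ℕ) ≠ (l : ℕ) := by
          intro hh
          have : σ z = l := Fin.ext hh
          rw [← hσi] at this
          exact hiz (σ.injective this).symm
        simp only [hl, Fin.val_mk] at h2 ⊢
        omega
    · -- M ≠ l : four distinct elements of N
      have hsub : ({z, M, l, i} : Finset (Fin n)) ⊆ N := by
        intro x hx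
        simp only [mem_insert, mem_singleton] at hx
        rcases hx with rfl | rfl | rfl | rfl
        · exact hzN
        · exact hMN
        · exact hlN
        · exact hiN
      have h4 := Finset.card_le_card hsub
      rw [card_four hzM hzl (fun hh => hiz hh.symm) hMl (fun hh => hiM hh.symm)
        (fun hh => hil hh.symm)] at h4
      omega
  have hmn : m < n := by rw [hm]; exact M.isLt
  -- Step 1: positions before M carry values k, k+1, ...
  have step1 : ∀ ii : ℕ, ∀ i : Fin n, (i : ℕ) = ii → (i : ℕ) < m →
      ((σ i : Fin n) : ℕ) = k + (i : ℕ) := by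
    intro ii
    induction ii using Nat.strong_induction_on with
    | _ ii IH =>
      rintro i rfl him
      rcases Nat.eq_zero_or_pos (i : ℕ) with h0 | hpos
      · have hiz : i = z := Fin.ext (by simp [hz, h0])
        rw [hiz, hk]
        simp only [hz, Fin.val_mk]
        omega
      · have hiz : i ≠ z := fun he => by rw [he] at hpos; simp [hz] at hpos
        have hiM : i ≠ M := fun he => by rw [he] at him; omega
        obtain ⟨j, hj, hv⟩ := hLR i hiz hiM
        rw [Fin.lt_def] at hj
        rw [Fin.lt_def] at hv
        have hjval := IH (j : ℕ) (by omega) j rfl (by omega)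
        have hlow : k < ((σ i : Fin n) : ℕ) := by omega
        have h2 : ¬ ((σ i : Fin n) : ℕ) < k + (i : ℕ) := by
          intro hlt
          have hℓn : ((σ i : Fin n) : ℕ) - k < n := by omega
          have h5 := IH (((σ i : Fin n) : ℕ) - k) (by omega) ⟨_, hℓn⟩ rfl
            (by simp only [Fin.val_mk]; omega)
          simp only [Fin.val_mk] at h5
          have heq : ((σ (⟨_, hℓn⟩ : Fin n) : Fin n) : ℕ) = ((σ i : Fin n) : ℕ) := by omega
          have h6 := inj _ _ heq
          have h7 := congrArg Fin.val h6
          simp only [Fin.val_mk] at h7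
          omega
        have h3 : ¬ k + (i : ℕ) < ((σ i : Fin n) : ℕ) := by
          intro hgt
          have hbound : k + (i : ℕ) < n := lt_trans hgt (σ i).isLt
          have hσjF : σ (σ.symm ⟨k + (i : ℕ), hbound⟩) = ⟨k + (i : ℕ), hbound⟩ :=
            σ.apply_symm_apply _
          set jF := σ.symm ⟨k + (i : ℕ), hbound⟩ with hjF
          have hjFv : (i : ℕ) < (jF : ℕ) := by
            rcases lt_trichotomy (jF : ℕ) (i : ℕ) with hlt | heq | hgt2
            · have h5 := IH (jF : ℕ) (by omega) jF rfl (by omega)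
              rw [hσjF] at h5
              simp only [Fin.val_mk] at h5
              omega
            · have h5 : jF = i := Fin.ext heq
              rw [h5] at hσjF
              rw [hσjF] at hgt
              simp only [Fin.val_mk] at hgt
              omega
            · exact hgt2
          have h5 := lem_ii i jF hpos hjFv
          rw [hσjF] at h5
          simp only [Fin.val_mk] at h5
          omega
        omega
  have hkmn : k + m ≤ n := by
    have h5 := step1 (m - 1) ⟨m - 1, by omega⟩ rfl (by simp only [Fin.val_mk]; omega)
    have h6 := (σ (⟨m - 1, by omega⟩ : Fin n)).isLt
    simp only [Fin.val_mk] at h5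
    omega
  -- Step 2: positions in [m, k+m) carry values 0, 1, ...
  have step2 : ∀ ii : ℕ, ∀ i : Fin n, (i : ℕ) = ii → m ≤ (i : ℕ) → (i : ℕ) < k + m →
      ((σ i : Fin n) : ℕ) = (i : ℕ) - m := by
    intro ii
    induction ii using Nat.strong_induction_on with
    | _ ii IH =>
      rintro i rfl hge hlt
      rcases eq_or_lt_of_le hge with heq | hgt
      · have hiM : i = M := Fin.ext (by omega)
        rw [hiM, hσM]
        simp only [hz, Fin.val_mk]
        omega
      · have hvge : (i : ℕ) - m ≤ ((σ i : Fin n) : ℕ) := by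
          by_contra hlt2
          push_neg at hlt2
          have hbb : ((σ i : Fin n) : ℕ) + m < n := by omega
          have h5 := IH (((σ i : Fin n) : ℕ) + m) (by omega) ⟨_, hbb⟩ rfl
            (by simp only [Fin.val_mk]; omega) (by simp only [Fin.val_mk]; omega)
          simp only [Fin.val_mk] at h5
          have heq2 : ((σ (⟨_, hbb⟩ : Fin n) : Fin n) : ℕ) = ((σ i : Fin n) : ℕ) := by
            rw [h5]; omega
          have h6 := inj _ _ heq2
          have h7 := congrArg Fin.val h6
          simp only [Fin.val_mk] at h7
          omega
        rcases eq_or_lt_of_le hvge with heqv | hgtv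
        · omega
        · exfalso
          have hb : (i : ℕ) - m < n := by omega
          have hσjF : σ (σ.symm ⟨(i : ℕ) - m, hb⟩) = ⟨(i : ℕ) - m, hb⟩ := σ.apply_symm_apply _
          set jF := σ.symm ⟨(i : ℕ) - m, hb⟩ with hjF
          have hjFgt : (i : ℕ) < (jF : ℕ) := by
            rcases lt_trichotomy (jF : ℕ) (i : ℕ) with hlt2 | heq2 | hgt2
            · rcases Nat.lt_or_ge (jF : ℕ) m with hc1 | hc2
              · have h5 := step1 (jF : ℕ) jF rfl hc1
                rw [hσjF] at h5
                simp only [Fin.val_mk] at h5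
                omega
              · have h5 := IH (jF : ℕ) (by omega) jF rfl hc2 (by omega)
                rw [hσjF] at h5
                simp only [Fin.val_mk] at h5
                omega
            · have h5 : jF = i := Fin.ext heq2
              rw [h5] at hσjF
              rw [hσjF] at hgtv
              simp only [Fin.val_mk] at hgtv
              omega
            · exact hgt2
          have h5 := lem_star i jF (by omega) hjFgt
          rw [hσjF] at h5
          simp only [Fin.val_mk] at h5
          omega
  -- Step 3: positions from k+m on are fixed
  have step3 : ∀ ii : ℕ, ∀ i : Fin n, (i : ℕ) = ii → k + m ≤ (i : ℕ) →
      ((σ i : Fin n) : ℕ) = (i : ℕ) := by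
    intro ii
    induction ii using Nat.strong_induction_on with
    | _ ii IH =>
      rintro i rfl hge
      have hvge : (i : ℕ) ≤ ((σ i : Fin n) : ℕ) := by
        by_contra hlt2
        push_neg at hlt2
        rcases Nat.lt_or_ge ((σ i : Fin n) : ℕ) k with hc1 | hc2
        · have hbb : ((σ i : Fin n) : ℕ) + m < n := by omega
          have h5 := step2 (((σ i : Fin n) : ℕ) + m) ⟨_, hbb⟩ rfl
            (by simp only [Fin.val_mk]; omega) (by simp only [Fin.val_mk]; omega)
          simp only [Fin.val_mk] at h5
          have heq2 : ((σ (⟨_, hbb⟩ : Fin n) : Fin n) : ℕ) = ((σ i : Fin n) : ℕ) := by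
            rw [h5]; omega
          have h6 := inj _ _ heq2
          have h7 := congrArg Fin.val h6
          simp only [Fin.val_mk] at h7
          omega
        · rcases Nat.lt_or_ge ((σ i : Fin n) : ℕ) (k + m) with hc3 | hc4
          · have hbb : ((σ i : Fin n) : ℕ) - k < n := by omega
            have h5 := step1 (((σ i : Fin n) : ℕ) - k) ⟨_, hbb⟩ rfl
              (by simp only [Fin.val_mk]; omega)
            simp only [Fin.val_mk] at h5
            have heq2 : ((σ (⟨_, hbb⟩ : Fin n) : Fin n) : ℕ) = ((σ i : Fin n) : ℕ) := by
              rw [h5]; omega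
            have h6 := inj _ _ heq2
            have h7 := congrArg Fin.val h6
            simp only [Fin.val_mk] at h7
            omega
          · have h5 := IH ((σ i : Fin n) : ℕ) (by omega) ⟨_, (σ i).isLt⟩ rfl
              (by simp only [Fin.val_mk]; omega)
            simp only [Fin.val_mk] at h5
            have heq2 : ((σ (⟨_, (σ i).isLt⟩ : Fin n) : Fin n) : ℕ) = ((σ i : Fin n) : ℕ) := by
              rw [h5]
            have h6 := inj _ _ heq2
            have h7 := congrArg Fin.val h6
            simp only [Fin.val_mk] at h7
            omega
      rcases eq_or_lt_of_le hvge with heqv | hgtv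
      · exact heqv.symm
      · exfalso
        have hσjF : σ (σ.symm ⟨(i : ℕ), i.isLt⟩) = ⟨(i : ℕ), i.isLt⟩ := σ.apply_symm_apply _
        set jF := σ.symm ⟨(i : ℕ), i.isLt⟩ with hjF
        have hjFgt : (i : ℕ) < (jF : ℕ) := by
          rcases lt_trichotomy (jF : ℕ) (i : ℕ) with hlt2 | heq2 | hgt2
          · rcases Nat.lt_or_ge (jF : ℕ) m with hc1 | hc2
            · have h5 := step1 (jF : ℕ) jF rfl hc1
              rw [hσjF] at h5
              simp only [Fin.val_mk] at h5
              omega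
            · rcases Nat.lt_or_ge (jF : ℕ) (k + m) with hc3 | hc4
              · have h5 := step2 (jF : ℕ) jF rfl hc2 hc3
                rw [hσjF] at h5
                simp only [Fin.val_mk] at h5
                omega
              · have h5 := IH (jF : ℕ) (by omega) jF rfl hc4
                rw [hσjF] at h5
                simp only [Fin.val_mk] at h5
                omega
          · have h5 : jF = i := Fin.ext heq2
            rw [h5] at hσjF
            rw [hσjF] at hgtv
            simp only [Fin.val_mk] at hgtv
            omega
          · exact hgt2
        have h5 := lem_ii i jF (by omega) hjFgt
        rw [hσjF] at h5
        simp only [Fin.val_mk] at h5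
        omega
  -- the exclusion when k + m = n
  have hexc : ¬(k + m = n ∧ 2 ≤ k ∧ 2 ≤ m) := by
    rintro ⟨he, hk2, hm2⟩
    have hpval := step1 (m - 1) ⟨m - 1, by omega⟩ rfl (by simp only [Fin.val_mk]; omega)
    simp only [Fin.val_mk] at hpval
    set p : Fin n := ⟨m - 1, by omega⟩ with hp
    have hpN : p ∈ N := by
      rw [hNdef, mem_filter]
      refine ⟨mem_univ _, fun hG => ?_⟩
      obtain ⟨⟨j, hj, hv⟩, _⟩ := hG
      rw [Fin.lt_def] at hv
      have := (σ j).isLt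
      omega
    have hsub : ({z, M, l, p} : Finset (Fin n)) ⊆ N := by
      intro x hx
      simp only [mem_insert, mem_singleton] at hx
      rcases hx with rfl | rfl | rfl | rfl
      · exact hzN
      · exact hMN
      · exact hlN
      · exact hpN
    have h4 := Finset.card_le_card hsub
    rw [card_four hzM hzl
      (by simp only [ne_eq, Fin.ext_iff, hz, hp, Fin.val_mk]; omega)
      (by simp only [ne_eq, Fin.ext_iff, hl, Fin.val_mk]; omega)
      (by simp only [ne_eq, Fin.ext_iff, hp, Fin.val_mk]; omega)
      (by simp only [ne_eq, Fin.ext_iff, hl, hp, Fin.val_mk]; omega)] at h4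
    omega
  refine ⟨k, m, hk1, hm1, hkmn, by omega, ?_⟩
  apply Equiv.ext
  intro i
  apply Fin.ext
  rw [F_val hkmn]
  unfold ffun
  split_ifs with c1 c2
  · exact step1 (i : ℕ) i rfl c1
  · exact step2 (i : ℕ) i rfl (by omega) c2
  · exact step3 (i : ℕ) i rfl (by omega)

end Rev2

section Asm2

variable {n : ℕ}

def T (n : ℕ) : Finset (ℕ × ℕ) :=
  (range n ×ˢ range n).filter fun p =>
    0 < p.1 ∧ 0 < p.2 ∧ p.1 + p.2 ≤ n ∧ (p.1 + p.2 ≤ n - 1 ∨ p.1 = 1 ∨ p.2 = 1)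

lemma T1card (hn : 4 ≤ n) :
    ((range n ×ˢ range n).filter fun p : ℕ × ℕ => 0 < p.1 ∧ 0 < p.2 ∧ p.1 + p.2 ≤ n - 1).card
      = (n - 1).choose 2 := by
  have hbi : ((range n ×ˢ range n).filter fun p : ℕ × ℕ => 0 < p.1 ∧ 0 < p.2 ∧ p.1 + p.2 ≤ n - 1)
      = (Ico 1 n).biUnion (fun a => {a} ×ˢ Ico 1 (n - a)) := by
    ext ⟨a, b⟩
    simp only [mem_filter, mem_product, mem_range, mem_biUnion, mem_Ico, mem_singleton]
    constructor
    · rintro ⟨⟨ha, hb⟩, h1, h2, h3⟩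
      exact ⟨a, ⟨h1, ha⟩, rfl, h2, by omega⟩
    · rintro ⟨c, ⟨hc1, hc2⟩, rfl, hb1, hb2⟩
      refine ⟨⟨hc2, by omega⟩, hc1, hb1, by omega⟩
  rw [hbi, Finset.card_biUnion]
  · have hcc : ∀ a ∈ Ico 1 n, ({a} ×ˢ Ico 1 (n - a)).card = n - 1 - a := by
      intro a _
      rw [card_product, card_singleton, Nat.card_Ico, one_mul]
      omega
    rw [Finset.sum_congr rfl hcc]
    have hsum : ∑ a ∈ Ico 1 n, (n - 1 - a) = ∑ b ∈ range (n - 1), b := by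
      refine Finset.sum_nbij' (fun a => n - 1 - a) (fun b => n - 1 - b) ?_ ?_ ?_ ?_ ?_
      · intro a ha; simp only [mem_Ico] at ha; simp only [mem_range]; omega
      · intro b hb; simp only [mem_range] at hb; simp only [mem_Ico]; omega
      · intro a ha; simp only [mem_Ico] at ha
        show n - 1 - (n - 1 - a) = a
        omega
      · intro b hb; simp only [mem_range] at hb
        show n - 1 - (n - 1 - b) = b
        omega
      · intro a ha; rfl
    rw [hsum, Nat.choose_two_right]
    have hg := Finset.sum_range_id_mul_two (n - 1)
    generalize hX : (n - 1) * (n - 1 - 1) = X at hg ⊢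
    omega
  · intro a ha b hb hab
    simp only [Finset.disjoint_left]
    rintro ⟨x, y⟩ hx hy
    simp only [mem_product, mem_singleton] at hx hy
    exact hab (hx.1 ▸ hy.1 ▸ rfl)

lemma Tcard (hn : 4 ≤ n) : (T n).card = 2 + (n - 1).choose 2 := by
  have hsplit : T n =
      ((range n ×ˢ range n).filter fun p : ℕ × ℕ => 0 < p.1 ∧ 0 < p.2 ∧ p.1 + p.2 ≤ n - 1)
        ∪ {(1, n - 1), (n - 1, 1)} := by
    ext ⟨a, b⟩
    simp only [T, mem_filter, mem_product, mem_range, mem_union, mem_insert, mem_singleton,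
      Prod.mk.injEq]
    omega
  rw [hsplit, Finset.card_union_of_disjoint, T1card hn]
  · have h2 : ({(1, n - 1), (n - 1, 1)} : Finset (ℕ × ℕ)).card = 2 := by
      rw [Finset.card_insert_of_notMem (by simp only [mem_singleton, Prod.mk.injEq]; omega),
        Finset.card_singleton]
    rw [h2]
    omega
  · simp only [Finset.disjoint_left]
    rintro ⟨x, y⟩ hx hy
    simp only [mem_filter, mem_product, mem_range] at hx
    simp only [mem_insert, mem_singleton, Prod.mk.injEq] at hy
    omega

theorem stmt9 (n : ℕ) (hn : 4 ≤ n) :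
    Nat.card {σ : Equiv.Perm (Fin n) // avoids132 σ ∧ mmp 1 0 1 0 σ = n - 3} =
      2 + (n - 1).choose 2 := by
  classical
  rw [Nat.card_eq_fintype_card, Fintype.card_subtype]
  have hkey : (univ.filter fun σ : Equiv.Perm (Fin n) => avoids132 σ ∧ mmp 1 0 1 0 σ = n - 3)
      = (T n).image fun p => F n p.1 p.2 := by
    ext σ
    simp only [mem_filter, mem_univ, true_and, mem_image]
    constructor
    · rintro ⟨h132, hmm⟩
      have hN3 : (univ.filter fun i => ¬ G σ i).card = 3 := by
        have h1 := card_G_add_notG σ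
        rw [mmp_eq_card_s9] at hmm
        omega
      obtain ⟨k, m, hk, hm2, hkmn, hT, hform⟩ := reverse hn σ h132 hN3
      refine ⟨(k, m), ?_, hform.symm⟩
      simp only [T, mem_filter, mem_product, mem_range]
      omega
    · rintro ⟨⟨k, m⟩, hmem, rfl⟩
      dsimp only
      simp only [T, mem_filter, mem_product, mem_range] at hmem
      obtain ⟨⟨hk1n, hm1n⟩, hk, hm2, hkmn, hT⟩ := hmem
      refine ⟨F_avoids k m hkmn, ?_⟩
      rw [mmp_eq_card_s9]
      have h1 := card_G_add_notG (F n k m)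
      have h2 := notG_F_card k m hk hm2 hkmn hT hn
      omega
  rw [hkey, Finset.card_image_of_injOn, Tcard hn]
  intro p hp q hq heq
  have hp2 : p ∈ T n := hp
  have hq2 : q ∈ T n := hq
  simp only [T, mem_filter, mem_product, mem_range] at hp2 hq2
  have hval : ∀ x, x < n → ffun p.1 p.2 x = ffun q.1 q.2 x := by
    intro x hx
    have h0 := congrArg (fun π : Equiv.Perm (Fin n) => ((π ⟨x, hx⟩ : Fin n) : ℕ)) heq
    simp only at h0
    rw [F_val (by omega), F_val (by omega)] at h0
    exact h0
  have e1 := hval 0 (by omega)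
  have e2 := hval p.2 (by omega)
  have e3 := hval q.2 (by omega)
  unfold ffun at e1 e2 e3
  split_ifs at e1 e2 e3 <;> exact Prod.ext_iff.mpr ⟨by omega, by omega⟩

end Asm2
end

section
/- For k ≥ 1, m ≥ 2 and n ≥ m+k+2, the number of 132-avoiding permutations of length n with exactly n-m-k-1 matches of MMP(k,0,m,0) equals C_{m+1} + (2k+1)·C_m + 2·C_m·(n-k-m-2), where C_j denotes the j-th Catalan number. -/
open Finset

namespace MMPAux

/-- right-upper count -/
def Rc {n : ℕ} (σ : Equiv.Perm (Fin n)) (i : Fin n) : ℕ :=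
  (Finset.univ.filter fun j => i < j ∧ σ i < σ j).card

/-- left-lower count -/
def Lc {n : ℕ} (σ : Equiv.Perm (Fin n)) (i : Fin n) : ℕ :=
  (Finset.univ.filter fun j => j < i ∧ σ j < σ i).card

lemma mmpMatch_iff {n : ℕ} (k m : ℕ) (σ : Equiv.Perm (Fin n)) (i : Fin n) :
    mmpMatch k 0 m 0 σ i ↔ k ≤ Rc σ i ∧ m ≤ Lc σ i := by
  constructor
  · rintro ⟨h1, _, h3, _⟩; exact ⟨h1, h3⟩
  · rintro ⟨h1, h3⟩; exact ⟨h1, Nat.zero_le _, h3, Nat.zero_le _⟩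

instance {n a b c d : ℕ} (σ : Equiv.Perm (Fin n)) (i : Fin n) :
    Decidable (mmpMatch a b c d σ i) := by unfold mmpMatch; infer_instance

lemma mmp_eq_card {n : ℕ} (k m : ℕ) (σ : Equiv.Perm (Fin n)) :
    mmp k 0 m 0 σ = (Finset.univ.filter fun i => k ≤ Rc σ i ∧ m ≤ Lc σ i).card := by
  rw [mmp, Nat.card_eq_fintype_card, Fintype.card_subtype]
  congr 1
  apply Finset.filter_congr
  intro i _
  simp [mmpMatch_iff]

variable {n : ℕ}

/-- build the layered permutation α · max · β -/
def buildFun (a : ℕ) (ha : a ≤ n) (α : Equiv.Perm (Fin a)) (β : Equiv.Perm (Fin (n - a)))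
    (i : Fin (n + 1)) : Fin (n + 1) :=
  if h : (i : ℕ) < a then
    ⟨n - a + (α ⟨i, h⟩ : ℕ), by have := (α ⟨i, h⟩).isLt; omega⟩
  else if h2 : (i : ℕ) = a then ⟨n, by omega⟩
  else ⟨(β ⟨(i : ℕ) - (a + 1), by have := i.isLt; omega⟩ : ℕ), by
    have := (β ⟨(i : ℕ) - (a + 1), by have := i.isLt; omega⟩).isLt; omega⟩

lemma buildFun_lt (a : ℕ) (ha : a ≤ n) (α : Equiv.Perm (Fin a)) (β : Equiv.Perm (Fin (n - a)))
    (i : Fin (n + 1)) (h : (i : ℕ) < a) :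
    (buildFun a ha α β i : ℕ) = n - a + (α ⟨i, h⟩ : ℕ) := by
  rw [buildFun, dif_pos h]

lemma buildFun_lt_range (a : ℕ) (ha : a ≤ n) (α : Equiv.Perm (Fin a))
    (β : Equiv.Perm (Fin (n - a))) (i : Fin (n + 1)) (h : (i : ℕ) < a) :
    n - a ≤ (buildFun a ha α β i : ℕ) ∧ (buildFun a ha α β i : ℕ) < n := by
  rw [buildFun_lt a ha α β i h]
  have := (α ⟨i, h⟩).isLt
  omega

lemma buildFun_eq (a : ℕ) (ha : a ≤ n) (α : Equiv.Perm (Fin a)) (β : Equiv.Perm (Fin (n - a)))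
    (i : Fin (n + 1)) (h : (i : ℕ) = a) :
    (buildFun a ha α β i : ℕ) = n := by
  rw [buildFun, dif_neg (by omega), dif_pos h]

lemma buildFun_gt (a : ℕ) (ha : a ≤ n) (α : Equiv.Perm (Fin a)) (β : Equiv.Perm (Fin (n - a)))
    (i : Fin (n + 1)) (h : a < (i : ℕ)) :
    (buildFun a ha α β i : ℕ) =
      (β ⟨(i : ℕ) - (a + 1), by have := i.isLt; omega⟩ : ℕ) := by
  rw [buildFun, dif_neg (by omega), dif_neg (by omega)]

lemma buildFun_gt_range (a : ℕ) (ha : a ≤ n) (α : Equiv.Perm (Fin a))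
    (β : Equiv.Perm (Fin (n - a))) (i : Fin (n + 1)) (h : a < (i : ℕ)) :
    (buildFun a ha α β i : ℕ) < n - a := by
  rw [buildFun_gt a ha α β i h]
  exact (β _).isLt

lemma buildFun_inj (a : ℕ) (ha : a ≤ n) (α : Equiv.Perm (Fin a)) (β : Equiv.Perm (Fin (n - a))) :
    Function.Injective (buildFun a ha α β) := by
  intro i j hij
  have hval : (buildFun a ha α β i : ℕ) = (buildFun a ha α β j : ℕ) := by rw [hij]
  rcases Nat.lt_trichotomy (i : ℕ) a with hi | hi | hi <;>
    rcases Nat.lt_trichotomy (j : ℕ) a with hj | hj | hj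
  · rw [buildFun_lt a ha α β i hi, buildFun_lt a ha α β j hj] at hval
    have : α ⟨(i : ℕ), hi⟩ = α ⟨(j : ℕ), hj⟩ := Fin.ext (by omega)
    have := α.injective this
    rw [Fin.mk.injEq] at this
    exact Fin.ext this
  · have h1 := buildFun_lt_range a ha α β i hi
    have h2 := buildFun_eq a ha α β j hj
    omega
  · have h1 := buildFun_lt_range a ha α β i hi
    have h2 := buildFun_gt_range a ha α β j hj
    omega
  · have h1 := buildFun_eq a ha α β i hi
    have h2 := buildFun_lt_range a ha α β j hj
    omega
  · exact Fin.ext (by omega)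
  · have h1 := buildFun_eq a ha α β i hi
    have h2 := buildFun_gt_range a ha α β j hj
    omega
  · have h1 := buildFun_gt_range a ha α β i hi
    have h2 := buildFun_lt_range a ha α β j hj
    omega
  · have h1 := buildFun_gt_range a ha α β i hi
    have h2 := buildFun_eq a ha α β j hj
    omega
  · rw [buildFun_gt a ha α β i hi, buildFun_gt a ha α β j hj] at hval
    have : β ⟨(i : ℕ) - (a + 1), by have := i.isLt; omega⟩ =
        β ⟨(j : ℕ) - (a + 1), by have := j.isLt; omega⟩ := Fin.ext hval
    have := β.injective this
    rw [Fin.mk.injEq] at this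
    exact Fin.ext (by omega)

noncomputable def buildPerm (a : ℕ) (ha : a ≤ n) (α : Equiv.Perm (Fin a))
    (β : Equiv.Perm (Fin (n - a))) : Equiv.Perm (Fin (n + 1)) :=
  Equiv.ofBijective _ (Finite.injective_iff_bijective.mp (buildFun_inj a ha α β))

lemma buildPerm_apply (a : ℕ) (ha : a ≤ n) (α : Equiv.Perm (Fin a))
    (β : Equiv.Perm (Fin (n - a))) (i : Fin (n + 1)) :
    buildPerm a ha α β i = buildFun a ha α β i := rfl

lemma buildPerm_lt (a : ℕ) (ha : a ≤ n) (α : Equiv.Perm (Fin a))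
    (β : Equiv.Perm (Fin (n - a))) (i : Fin (n + 1)) (h : (i : ℕ) < a) :
    buildPerm a ha α β i = ⟨n - a + (α ⟨i, h⟩ : ℕ), by have := (α ⟨i, h⟩).isLt; omega⟩ := by
  rw [buildPerm_apply, buildFun, dif_pos h]

lemma buildPerm_eq (a : ℕ) (ha : a ≤ n) (α : Equiv.Perm (Fin a))
    (β : Equiv.Perm (Fin (n - a))) (i : Fin (n + 1)) (h : (i : ℕ) = a) :
    buildPerm a ha α β i = ⟨n, by omega⟩ := by
  rw [buildPerm_apply, buildFun, dif_neg (by omega), dif_pos h]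

lemma buildPerm_gt (a : ℕ) (ha : a ≤ n) (α : Equiv.Perm (Fin a))
    (β : Equiv.Perm (Fin (n - a))) (i : Fin (n + 1)) (h : a < (i : ℕ)) :
    buildPerm a ha α β i = ⟨(β ⟨(i : ℕ) - (a + 1), by have := i.isLt; omega⟩ : ℕ), by
      have := (β ⟨(i : ℕ) - (a + 1), by have := i.isLt; omega⟩).isLt; omega⟩ := by
  rw [buildPerm_apply, buildFun, dif_neg (by omega), dif_neg (by omega)]



def embA (a : ℕ) (ha : a ≤ n) : Fin a ↪ Fin (n + 1) :=
  ⟨fun x => ⟨(x : ℕ), by have := x.isLt; omega⟩, by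
    intro x y h; rw [Fin.mk.injEq] at h; exact Fin.ext h⟩

def embB (a : ℕ) (ha : a ≤ n) : Fin (n - a) ↪ Fin (n + 1) :=
  ⟨fun x => ⟨a + 1 + (x : ℕ), by have := x.isLt; omega⟩, by
    intro x y h; rw [Fin.mk.injEq] at h; exact Fin.ext (by omega)⟩

def posA (a : ℕ) (ha : a ≤ n) : Fin (n + 1) := ⟨a, by omega⟩

section Counts

variable (a : ℕ) (ha : a ≤ n) (α : Equiv.Perm (Fin a)) (β : Equiv.Perm (Fin (n - a)))

lemma bp_lt (i : Fin (n + 1)) (h : (i : ℕ) < a) :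
    (buildPerm a ha α β i : ℕ) = n - a + (α ⟨i, h⟩ : ℕ) := buildFun_lt a ha α β i h

lemma bp_eq (i : Fin (n + 1)) (h : (i : ℕ) = a) :
    (buildPerm a ha α β i : ℕ) = n := buildFun_eq a ha α β i h

lemma bp_gt (i : Fin (n + 1)) (h : a < (i : ℕ)) :
    (buildPerm a ha α β i : ℕ) =
      (β ⟨(i : ℕ) - (a + 1), by have := i.isLt; omega⟩ : ℕ) := buildFun_gt a ha α β i h

lemma bp_gt_range (i : Fin (n + 1)) (h : a < (i : ℕ)) :
    (buildPerm a ha α β i : ℕ) < n - a := buildFun_gt_range a ha α β i h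

lemma bp_lt_range (i : Fin (n + 1)) (h : (i : ℕ) < a) :
    n - a ≤ (buildPerm a ha α β i : ℕ) ∧ (buildPerm a ha α β i : ℕ) < n :=
  buildFun_lt_range a ha α β i h

lemma embA_val (x : Fin a) : ((embA a ha x : Fin (n+1)) : ℕ) = (x : ℕ) := rfl
lemma embB_val (x : Fin (n - a)) : ((embB a ha x : Fin (n+1)) : ℕ) = a + 1 + (x : ℕ) := rfl

lemma bp_embA (x : Fin a) :
    (buildPerm a ha α β (embA a ha x) : ℕ) = n - a + (α x : ℕ) := by
  rw [bp_lt a ha α β _ (by rw [embA_val]; exact x.isLt)]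
  congr 1

lemma bp_embB (x : Fin (n - a)) :
    (buildPerm a ha α β (embB a ha x) : ℕ) = (β x : ℕ) := by
  rw [bp_gt a ha α β _ (by rw [embB_val]; omega)]
  congr 2
  apply Fin.ext
  simp [embB_val]

lemma Rc_embA (x : Fin a) :
    Rc (buildPerm a ha α β) (embA a ha x) = Rc α x + 1 := by
  set σ := buildPerm a ha α β with hσ
  have hset : (Finset.univ.filter fun j => embA a ha x < j ∧ σ (embA a ha x) < σ j) =
      insert (posA a ha)
        ((Finset.univ.filter fun y => x < y ∧ α x < α y).map (embA a ha)) := by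
    ext j
    simp only [Finset.mem_filter, Finset.mem_univ, true_and, Finset.mem_insert,
      Finset.mem_map]
    constructor
    · rintro ⟨hlt, hvlt⟩
      rw [Fin.lt_def] at hlt hvlt
      rw [embA_val] at hlt
      rw [bp_embA] at hvlt
      rcases Nat.lt_trichotomy (j : ℕ) a with hj | hj | hj
      · right
        refine ⟨⟨(j : ℕ), hj⟩, ?_, Fin.ext rfl⟩
        have : σ j = buildPerm a ha α β j := rfl
        rw [this, bp_lt a ha α β j hj] at hvlt
        have hax := (α x).isLt
        have haj := (α ⟨(j : ℕ), hj⟩).isLt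
        exact ⟨by rw [Fin.lt_def]; exact hlt, by rw [Fin.lt_def]; omega⟩
      · left; exact Fin.ext hj
      · exfalso
        have : σ j = buildPerm a ha α β j := rfl
        have h2 := bp_gt_range a ha α β j hj
        rw [this] at hvlt
        omega
    · rintro (rfl | ⟨y, hy, rfl⟩)
      · constructor
        · rw [Fin.lt_def, embA_val]; exact x.isLt
        · rw [Fin.lt_def, bp_embA]
          have : σ (posA a ha) = buildPerm a ha α β (posA a ha) := rfl
          rw [this, bp_eq a ha α β _ rfl]
          have := (α x).isLt
          omega
      · obtain ⟨hxy, hαxy⟩ := hy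
        rw [Fin.lt_def] at hxy
        constructor
        · rw [Fin.lt_def, embA_val, embA_val]; exact hxy
        · rw [Fin.lt_def, bp_embA, bp_embA]
          rw [Fin.lt_def] at hαxy
          omega
  rw [Rc, hset, Finset.card_insert_of_notMem, Finset.card_map, Rc, Nat.add_comm]
  simp only [Finset.mem_map]
  rintro ⟨y, -, hy⟩
  have : ((embA a ha y : Fin (n+1)) : ℕ) = a := by rw [hy]; rfl
  rw [embA_val] at this
  have := y.isLt
  omega

lemma Lc_embA (x : Fin a) :
    Lc (buildPerm a ha α β) (embA a ha x) = Lc α x := by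
  set σ := buildPerm a ha α β with hσ
  have hset : (Finset.univ.filter fun j => j < embA a ha x ∧ σ j < σ (embA a ha x)) =
      ((Finset.univ.filter fun y => y < x ∧ α y < α x).map (embA a ha)) := by
    ext j
    simp only [Finset.mem_filter, Finset.mem_univ, true_and, Finset.mem_map]
    constructor
    · rintro ⟨hlt, hvlt⟩
      rw [Fin.lt_def] at hlt hvlt
      rw [embA_val] at hlt
      have hja : (j : ℕ) < a := lt_trans hlt x.isLt
      refine ⟨⟨(j : ℕ), hja⟩, ?_, Fin.ext rfl⟩
      have : σ j = buildPerm a ha α β j := rfl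
      rw [this, bp_lt a ha α β j hja, bp_embA] at hvlt
      exact ⟨by rw [Fin.lt_def]; exact hlt, by rw [Fin.lt_def]; omega⟩
    · rintro ⟨y, hy, rfl⟩
      obtain ⟨hxy, hαxy⟩ := hy
      rw [Fin.lt_def] at hxy hαxy
      refine ⟨by rw [Fin.lt_def]; exact hxy, ?_⟩
      rw [Fin.lt_def, bp_embA, bp_embA]
      omega
  rw [Lc, hset, Finset.card_map, Lc]

lemma Rc_posA : Rc (buildPerm a ha α β) (posA a ha) = 0 := by
  rw [Rc, Finset.card_eq_zero, Finset.filter_eq_empty_iff]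
  intro j _
  rintro ⟨hlt, hvlt⟩
  rw [Fin.lt_def] at hlt hvlt
  have h1 : (buildPerm a ha α β (posA a ha) : ℕ) = n := bp_eq a ha α β _ rfl
  have h2 := (buildPerm a ha α β j).isLt
  omega

lemma Lc_posA : Lc (buildPerm a ha α β) (posA a ha) = a := by
  have hset : (Finset.univ.filter fun j => j < posA a ha ∧
      buildPerm a ha α β j < buildPerm a ha α β (posA a ha)) =
      (Finset.univ.filter fun j : Fin (n+1) => (j : ℕ) < a) := by
    ext j
    simp only [Finset.mem_filter, Finset.mem_univ, true_and]
    constructor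
    · rintro ⟨hlt, -⟩; rw [Fin.lt_def] at hlt; exact hlt
    · intro h
      refine ⟨by rw [Fin.lt_def]; exact h, ?_⟩
      rw [Fin.lt_def, bp_eq a ha α β (posA a ha) rfl]
      exact (bp_lt_range a ha α β j h).2
  rw [Lc, hset]
  have : (Finset.univ.filter fun j : Fin (n+1) => (j : ℕ) < a) = Finset.Iio (posA a ha) := by
    ext j
    simp [Finset.mem_Iio, Fin.lt_def, posA]
  rw [this, Fin.card_Iio]
  rfl

lemma Rc_embB (x : Fin (n - a)) :
    Rc (buildPerm a ha α β) (embB a ha x) = Rc β x := by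
  set σ := buildPerm a ha α β with hσ
  have hset : (Finset.univ.filter fun j => embB a ha x < j ∧ σ (embB a ha x) < σ j) =
      ((Finset.univ.filter fun y => x < y ∧ β x < β y).map (embB a ha)) := by
    ext j
    simp only [Finset.mem_filter, Finset.mem_univ, true_and, Finset.mem_map]
    constructor
    · rintro ⟨hlt, hvlt⟩
      rw [Fin.lt_def] at hlt hvlt
      rw [embB_val] at hlt
      rw [bp_embB] at hvlt
      have hja : a < (j : ℕ) := by omega
      refine ⟨⟨(j : ℕ) - (a + 1), by have := j.isLt; omega⟩, ?_, Fin.ext (by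
        rw [embB_val]; simp only; omega)⟩
      have : σ j = buildPerm a ha α β j := rfl
      rw [this, bp_gt a ha α β j hja] at hvlt
      refine ⟨by rw [Fin.lt_def]; simp only; omega, by rw [Fin.lt_def]; exact hvlt⟩
    · rintro ⟨y, hy, rfl⟩
      obtain ⟨hxy, hβxy⟩ := hy
      rw [Fin.lt_def] at hxy hβxy
      constructor
      · rw [Fin.lt_def, embB_val, embB_val]; omega
      · rw [Fin.lt_def, bp_embB, bp_embB]; exact hβxy
  rw [Rc, hset, Finset.card_map, Rc]

lemma Lc_embB (x : Fin (n - a)) :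
    Lc (buildPerm a ha α β) (embB a ha x) = Lc β x := by
  set σ := buildPerm a ha α β with hσ
  have hset : (Finset.univ.filter fun j => j < embB a ha x ∧ σ j < σ (embB a ha x)) =
      ((Finset.univ.filter fun y => y < x ∧ β y < β x).map (embB a ha)) := by
    ext j
    simp only [Finset.mem_filter, Finset.mem_univ, true_and, Finset.mem_map]
    constructor
    · rintro ⟨hlt, hvlt⟩
      rw [Fin.lt_def] at hlt hvlt
      rw [embB_val] at hlt
      rw [bp_embB] at hvlt
      have hβx := (β x).isLt
      rcases Nat.lt_trichotomy (j : ℕ) a with hj | hj | hj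
      · exfalso
        have : σ j = buildPerm a ha α β j := rfl
        have h2 := (bp_lt_range a ha α β j hj).1
        rw [this] at hvlt
        omega
      · exfalso
        have : σ j = buildPerm a ha α β j := rfl
        have h2 := bp_eq a ha α β j hj
        rw [this] at hvlt
        omega
      · refine ⟨⟨(j : ℕ) - (a + 1), by have := j.isLt; omega⟩, ?_, Fin.ext (by
          rw [embB_val]; simp only; omega)⟩
        have : σ j = buildPerm a ha α β j := rfl
        rw [this, bp_gt a ha α β j hj] at hvlt
        refine ⟨by rw [Fin.lt_def]; simp only; omega,
          by rw [Fin.lt_def]; exact hvlt⟩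
    · rintro ⟨y, hy, rfl⟩
      obtain ⟨hxy, hβxy⟩ := hy
      rw [Fin.lt_def] at hxy hβxy
      constructor
      · rw [Fin.lt_def, embB_val, embB_val]; omega
      · rw [Fin.lt_def, bp_embB, bp_embB]; exact hβxy
  rw [Lc, hset, Finset.card_map, Lc]
lemma mmp_buildPerm (k m : ℕ) :
    mmp k 0 m 0 (buildPerm a ha α β) =
      mmp (k - 1) 0 m 0 α + mmp k 0 m 0 β + (if k = 0 ∧ m ≤ a then 1 else 0) := by
  rw [mmp_eq_card, mmp_eq_card, mmp_eq_card]
  have hsplit : (Finset.univ.filter fun i =>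
      k ≤ Rc (buildPerm a ha α β) i ∧ m ≤ Lc (buildPerm a ha α β) i) =
      (((Finset.univ.filter fun x => k - 1 ≤ Rc α x ∧ m ≤ Lc α x).map (embA a ha) ∪
        (Finset.univ.filter fun x => k ≤ Rc β x ∧ m ≤ Lc β x).map (embB a ha)) ∪
       (if k = 0 ∧ m ≤ a then {posA a ha} else ∅)) := by
    ext i
    simp only [Finset.mem_filter, Finset.mem_univ, true_and, Finset.mem_union, Finset.mem_map]
    constructor
    · rintro ⟨h1, h2⟩
      rcases Nat.lt_trichotomy (i : ℕ) a with hi | hi | hi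
      · left; left
        have he : embA a ha ⟨(i : ℕ), hi⟩ = i := Fin.ext rfl
        rw [← he] at h1 h2
        rw [Rc_embA a ha α β] at h1
        rw [Lc_embA a ha α β] at h2
        exact ⟨⟨(i : ℕ), hi⟩, ⟨by omega, h2⟩, he⟩
      · right
        have he : i = posA a ha := Fin.ext hi
        rw [he] at h1 h2
        rw [Rc_posA a ha α β] at h1
        rw [Lc_posA a ha α β] at h2
        rw [he, if_pos ⟨Nat.le_zero.mp h1, h2⟩]
        exact Finset.mem_singleton_self _
      · left; right
        have hbound : (i : ℕ) - (a + 1) < n - a := by have := i.isLt; omega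
        have he : embB a ha ⟨(i : ℕ) - (a + 1), hbound⟩ = i := by
          apply Fin.ext; rw [embB_val]; simp only; omega
        rw [← he] at h1 h2
        rw [Rc_embB a ha α β] at h1
        rw [Lc_embB a ha α β] at h2
        exact ⟨⟨(i : ℕ) - (a + 1), hbound⟩, ⟨h1, h2⟩, he⟩
    · rintro ((⟨x, ⟨hx1, hx2⟩, rfl⟩ | ⟨x, ⟨hx1, hx2⟩, rfl⟩) | hmem)
      · rw [Rc_embA a ha α β, Lc_embA a ha α β]
        exact ⟨by omega, hx2⟩
      · rw [Rc_embB a ha α β, Lc_embB a ha α β]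
        exact ⟨hx1, hx2⟩
      · by_cases hc : k = 0 ∧ m ≤ a
        · rw [if_pos hc, Finset.mem_singleton] at hmem
          subst hmem
          rw [Rc_posA a ha α β, Lc_posA a ha α β]
          exact ⟨by omega, hc.2⟩
        · rw [if_neg hc] at hmem
          exact absurd hmem (Finset.notMem_empty _)
  have hAB : Disjoint
      ((Finset.univ.filter fun x => k - 1 ≤ Rc α x ∧ m ≤ Lc α x).map (embA a ha))
      ((Finset.univ.filter fun x => k ≤ Rc β x ∧ m ≤ Lc β x).map (embB a ha)) := by
    rw [Finset.disjoint_left]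
    rintro i hiA hiB
    rw [Finset.mem_map] at hiA hiB
    obtain ⟨x, -, rfl⟩ := hiA
    obtain ⟨y, -, hy⟩ := hiB
    have : ((embB a ha y : Fin (n+1)) : ℕ) = ((embA a ha x : Fin (n+1)) : ℕ) := by rw [hy]
    rw [embA_val, embB_val] at this
    have := x.isLt
    omega
  have hABT : Disjoint
      (((Finset.univ.filter fun x => k - 1 ≤ Rc α x ∧ m ≤ Lc α x).map (embA a ha)) ∪
       ((Finset.univ.filter fun x => k ≤ Rc β x ∧ m ≤ Lc β x).map (embB a ha)))
      (if k = 0 ∧ m ≤ a then ({posA a ha} : Finset (Fin (n+1))) else ∅) := by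
    rw [Finset.disjoint_left]
    rintro i hiAB hiT
    by_cases hc : k = 0 ∧ m ≤ a
    · rw [if_pos hc, Finset.mem_singleton] at hiT
      subst hiT
      rw [Finset.mem_union, Finset.mem_map, Finset.mem_map] at hiAB
      rcases hiAB with ⟨x, -, hx⟩ | ⟨x, -, hx⟩
      · have : ((embA a ha x : Fin (n+1)) : ℕ) = a := by rw [hx]; rfl
        rw [embA_val] at this
        have := x.isLt
        omega
      · have : ((embB a ha x : Fin (n+1)) : ℕ) = a := by rw [hx]; rfl
        rw [embB_val] at this
        omega
    · rw [if_neg hc] at hiT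
      exact absurd hiT (Finset.notMem_empty _)
  rw [hsplit, Finset.card_union_of_disjoint hABT, Finset.card_union_of_disjoint hAB,
    Finset.card_map, Finset.card_map]
  congr 1
  by_cases hc : k = 0 ∧ m ≤ a
  · rw [if_pos hc, if_pos hc, Finset.card_singleton]
  · rw [if_neg hc, if_neg hc, Finset.card_empty]

lemma avoids_buildPerm (hα : avoids132 α) (hβ : avoids132 β) :
    avoids132 (buildPerm a ha α β) := by
  rintro ⟨i, j, l, hij, hjl, h1, h2⟩
  rw [Fin.lt_def] at hij hjl h1 h2
  rcases Nat.lt_trichotomy (i : ℕ) a with hi | hi | hi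
  · rcases Nat.lt_trichotomy (j : ℕ) a with hj | hj | hj
    · rcases Nat.lt_trichotomy (l : ℕ) a with hl | hl | hl
      · apply hα
        refine ⟨⟨(i : ℕ), hi⟩, ⟨(j : ℕ), hj⟩, ⟨(l : ℕ), hl⟩, by rw [Fin.lt_def]; exact hij,
          by rw [Fin.lt_def]; exact hjl, ?_, ?_⟩ <;> rw [Fin.lt_def]
        · have e1 := bp_lt a ha α β i hi
          have e2 := bp_lt a ha α β l hl
          omega
        · have e1 := bp_lt a ha α β l hl
          have e2 := bp_lt a ha α β j hj
          omega
      · have e1 := bp_eq a ha α β l hl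
        have e2 := (bp_lt_range a ha α β j hj).2
        omega
      · have e1 := bp_gt_range a ha α β l hl
        have e2 := (bp_lt_range a ha α β i hi).1
        omega
    · have e1 := bp_gt_range a ha α β l (by omega)
      have e2 := (bp_lt_range a ha α β i hi).1
      omega
    · have e1 := bp_gt_range a ha α β l (by omega)
      have e2 := (bp_lt_range a ha α β i hi).1
      omega
  · have e1 := bp_eq a ha α β i hi
    have e2 := (buildPerm a ha α β l).isLt
    have e3 : ((buildPerm a ha α β l : Fin (n+1)) : ℕ) ≠ n := by
      intro hc
      have : buildPerm a ha α β l = buildPerm a ha α β i := Fin.ext (by omega)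
      have := (buildPerm a ha α β).injective this
      subst this
      omega
    omega
  · apply hβ
    have hj : a < (j : ℕ) := by omega
    have hl : a < (l : ℕ) := by omega
    have hin := i.isLt
    have hjn := j.isLt
    have hln := l.isLt
    refine ⟨⟨(i : ℕ) - (a+1), by omega⟩, ⟨(j : ℕ) - (a+1), by omega⟩,
      ⟨(l : ℕ) - (a+1), by omega⟩, by rw [Fin.lt_def]; simp only; omega,
      by rw [Fin.lt_def]; simp only; omega, ?_, ?_⟩ <;> rw [Fin.lt_def]
    · have e1 := bp_gt a ha α β i hi
      have e2 := bp_gt a ha α β l hl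
      omega
    · have e1 := bp_gt a ha α β l hl
      have e2 := bp_gt a ha α β j hj
      omega

end Counts

section Decomp

variable {n : ℕ}

lemma card_filter_lt (a : ℕ) (ha : a ≤ n) :
    (Finset.univ.filter fun j : Fin (n+1) => (j : ℕ) < a).card = a := by
  have : (Finset.univ.filter fun j : Fin (n+1) => (j : ℕ) < a) =
      Finset.Iio (⟨a, by omega⟩ : Fin (n+1)) := by
    ext j
    simp [Finset.mem_Iio, Fin.lt_def]
  rw [this, Fin.card_Iio]

lemma card_filter_gt (a : ℕ) (ha : a ≤ n) :
    (Finset.univ.filter fun j : Fin (n+1) => a < (j : ℕ)).card = n - a := by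
  have : (Finset.univ.filter fun j : Fin (n+1) => a < (j : ℕ)) =
      Finset.Ioi (⟨a, by omega⟩ : Fin (n+1)) := by
    ext j
    simp [Finset.mem_Ioi, Fin.lt_def]
  rw [this, Fin.card_Ioi]
  simp only [Fin.val_mk]
  omega

lemma exists_decomp (σ : Equiv.Perm (Fin (n+1))) (hσ : avoids132 σ) :
    ∃ (a : ℕ) (ha : a ≤ n) (α : Equiv.Perm (Fin a)) (β : Equiv.Perm (Fin (n - a))),
      avoids132 α ∧ avoids132 β ∧ buildPerm a ha α β = σ := by
  classical
  set p : Fin (n+1) := σ.symm ⟨n, by omega⟩ with hp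
  set a : ℕ := (p : ℕ) with hadef
  have ha : a ≤ n := by have := p.isLt; omega
  have htop : (σ p : ℕ) = n := by rw [hp, Equiv.apply_symm_apply]
  have hne : ∀ i : Fin (n+1), i ≠ p → (σ i : ℕ) < n := by
    intro i hip
    have h1 : σ i ≠ σ p := fun hc => hip (σ.injective hc)
    have h2 := (σ i).isLt
    have : (σ i : ℕ) ≠ (σ p : ℕ) := fun hc => h1 (Fin.ext hc)
    omega
  have hord : ∀ i j : Fin (n+1), (i : ℕ) < a → a < (j : ℕ) → (σ j : ℕ) < (σ i : ℕ) := by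
    intro i j hi hj
    by_contra hcon
    push_neg at hcon
    have hij : σ i ≠ σ j := fun hc => by
      have := σ.injective hc; subst this; omega
    have hlt : (σ i : ℕ) < (σ j : ℕ) := by
      rcases Nat.lt_or_ge (σ i : ℕ) (σ j : ℕ) with h | h
      · exact h
      · exact absurd (Fin.ext (le_antisymm hcon h) : σ i = σ j) hij
    apply hσ
    refine ⟨i, p, j, by rw [Fin.lt_def]; omega, by rw [Fin.lt_def]; omega,
      by rw [Fin.lt_def]; exact hlt, ?_⟩
    rw [Fin.lt_def, htop]
    exact hne j (fun hc => by rw [hc] at hj; omega)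
  have hlow : ∀ j : Fin (n+1), a < (j : ℕ) → (σ j : ℕ) < n - a := by
    intro j hj
    by_contra hcon
    push_neg at hcon
    have hjn : (σ j : ℕ) < n := hne j (fun hc => by rw [hc] at hj; omega)
    have hinj : Function.Injective (fun i : Fin (n+1) => (σ i : ℕ)) := by
      intro x y hxy
      exact σ.injective (Fin.ext hxy)
    have hcard : ((Finset.univ.filter fun i : Fin (n+1) => (i : ℕ) < a).image
        (fun i => (σ i : ℕ))).card = a := by
      rw [Finset.card_image_of_injective _ hinj, card_filter_lt a ha]
    have hsub : ((Finset.univ.filter fun i : Fin (n+1) => (i : ℕ) < a).image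
        (fun i => (σ i : ℕ))) ⊆ Finset.Ioc ((σ j : ℕ)) (n - 1) := by
      intro s hs
      rw [Finset.mem_image] at hs
      obtain ⟨i, hi, rfl⟩ := hs
      rw [Finset.mem_filter] at hi
      have h1 := hord i j hi.2 hj
      have h2 : (σ i : ℕ) < n := hne i (fun hc => by rw [hc] at hi; omega)
      rw [Finset.mem_Ioc]
      omega
    have := Finset.card_le_card hsub
    rw [hcard, Nat.card_Ioc] at this
    omega
  have hhigh : ∀ i : Fin (n+1), (i : ℕ) < a → n - a ≤ (σ i : ℕ) := by
    intro i hi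
    by_contra hcon
    push_neg at hcon
    have hinj : Function.Injective (fun j : Fin (n+1) => (σ j : ℕ)) := by
      intro x y hxy
      exact σ.injective (Fin.ext hxy)
    have hcard : ((Finset.univ.filter fun j : Fin (n+1) => a < (j : ℕ)).image
        (fun j => (σ j : ℕ))).card = n - a := by
      rw [Finset.card_image_of_injective _ hinj, card_filter_gt a ha]
    have hsub : ((Finset.univ.filter fun j : Fin (n+1) => a < (j : ℕ)).image
        (fun j => (σ j : ℕ))) ⊆ Finset.range ((σ i : ℕ)) := by
      intro s hs
      rw [Finset.mem_image] at hs
      obtain ⟨j, hj, rfl⟩ := hs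
      rw [Finset.mem_filter] at hj
      rw [Finset.mem_range]
      exact hord i j hi hj.2
    have := Finset.card_le_card hsub
    rw [hcard, Finset.card_range] at this
    omega
  -- build α
  have hαval : ∀ x : Fin a, (σ (embA a ha x) : ℕ) - (n - a) < a := by
    intro x
    have h1 := hhigh (embA a ha x) (by rw [embA_val]; exact x.isLt)
    have h2 : (σ (embA a ha x) : ℕ) < n := by
      apply hne
      intro hc
      have : ((embA a ha x : Fin (n+1)) : ℕ) = a := by rw [hc]
      rw [embA_val] at this
      have := x.isLt
      omega
    omega
  set αf : Fin a → Fin a := fun x => ⟨(σ (embA a ha x) : ℕ) - (n - a), hαval x⟩ with hαf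
  have hαinj : Function.Injective αf := by
    intro x y hxy
    rw [hαf, Fin.mk.injEq] at hxy
    have h1 := hhigh (embA a ha x) (by rw [embA_val]; exact x.isLt)
    have h2 := hhigh (embA a ha y) (by rw [embA_val]; exact y.isLt)
    have : σ (embA a ha x) = σ (embA a ha y) := Fin.ext (by omega)
    exact (embA a ha).injective (σ.injective this)
  set αe : Equiv.Perm (Fin a) := Equiv.ofBijective αf (Finite.injective_iff_bijective.mp hαinj)
    with hαe
  have hαe_apply : ∀ x, αe x = αf x := fun x => rfl
  -- build β
  have hβval : ∀ x : Fin (n - a), (σ (embB a ha x) : ℕ) < n - a := by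
    intro x
    apply hlow
    rw [embB_val]
    omega
  set βf : Fin (n - a) → Fin (n - a) := fun x => ⟨(σ (embB a ha x) : ℕ), hβval x⟩ with hβf
  have hβinj : Function.Injective βf := by
    intro x y hxy
    rw [hβf, Fin.mk.injEq] at hxy
    exact (embB a ha).injective (σ.injective (Fin.ext hxy))
  set βe : Equiv.Perm (Fin (n - a)) := Equiv.ofBijective βf
    (Finite.injective_iff_bijective.mp hβinj) with hβe
  have hβe_apply : ∀ x, βe x = βf x := fun x => rfl
  refine ⟨a, ha, αe, βe, ?_, ?_, ?_⟩
  · -- avoids132 αe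
    rintro ⟨x, y, z, hxy, hyz, h1, h2⟩
    rw [Fin.lt_def] at hxy hyz h1 h2
    have ex : ((αe x : Fin a) : ℕ) = (σ (embA a ha x) : ℕ) - (n - a) := rfl
    have ey : ((αe y : Fin a) : ℕ) = (σ (embA a ha y) : ℕ) - (n - a) := rfl
    have ez : ((αe z : Fin a) : ℕ) = (σ (embA a ha z) : ℕ) - (n - a) := rfl
    rw [ex, ez] at h1
    rw [ez, ey] at h2
    have hbx := hhigh (embA a ha x) (by rw [embA_val]; exact x.isLt)
    have hby := hhigh (embA a ha y) (by rw [embA_val]; exact y.isLt)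
    have hbz := hhigh (embA a ha z) (by rw [embA_val]; exact z.isLt)
    apply hσ
    refine ⟨embA a ha x, embA a ha y, embA a ha z, ?_, ?_, ?_, ?_⟩ <;> rw [Fin.lt_def]
    · rw [embA_val, embA_val]; exact hxy
    · rw [embA_val, embA_val]; exact hyz
    · omega
    · omega
  · -- avoids132 βe
    rintro ⟨x, y, z, hxy, hyz, h1, h2⟩
    rw [Fin.lt_def] at hxy hyz h1 h2
    have ex : ((βe x : Fin (n - a)) : ℕ) = (σ (embB a ha x) : ℕ) := rfl
    have ey : ((βe y : Fin (n - a)) : ℕ) = (σ (embB a ha y) : ℕ) := rfl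
    have ez : ((βe z : Fin (n - a)) : ℕ) = (σ (embB a ha z) : ℕ) := rfl
    rw [ex, ez] at h1
    rw [ez, ey] at h2
    apply hσ
    refine ⟨embB a ha x, embB a ha y, embB a ha z, ?_, ?_, ?_, ?_⟩ <;> rw [Fin.lt_def]
    · rw [embB_val, embB_val]; omega
    · rw [embB_val, embB_val]; omega
    · exact h1
    · exact h2
  · -- buildPerm = σ
    apply Equiv.ext
    intro i
    apply Fin.ext
    rcases Nat.lt_trichotomy (i : ℕ) a with hi | hi | hi
    · rw [bp_lt a ha αe βe i hi]
      have he : embA a ha ⟨(i : ℕ), hi⟩ = i := Fin.ext rfl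
      have eα : ((αe ⟨(i : ℕ), hi⟩ : Fin a) : ℕ) = (σ (embA a ha ⟨(i : ℕ), hi⟩) : ℕ) - (n - a) :=
        rfl
      rw [he] at eα
      have := hhigh i hi
      omega
    · rw [bp_eq a ha αe βe i hi]
      have : i = p := Fin.ext hi
      rw [this, htop]
    · have hbound : (i : ℕ) - (a + 1) < n - a := by have := i.isLt; omega
      rw [bp_gt a ha αe βe i hi]
      have he : embB a ha ⟨(i : ℕ) - (a + 1), hbound⟩ = i := by
        apply Fin.ext; rw [embB_val]; simp only; omega
      have eβ : ((βe ⟨(i : ℕ) - (a + 1), hbound⟩ : Fin (n - a)) : ℕ) =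
          (σ (embB a ha ⟨(i : ℕ) - (a + 1), hbound⟩) : ℕ) := rfl
      rw [he] at eβ
      exact eβ

end Decomp

section CardRec

lemma nat_card_sigma {ι : Type*} [Fintype ι] (f : ι → Type*) [∀ i, Finite (f i)] :
    Nat.card (Σ i, f i) = ∑ i, Nat.card (f i) := by
  letI : ∀ i, Fintype (f i) := fun i => Fintype.ofFinite _
  simp [Nat.card_eq_fintype_card]

lemma card_pair {A B : Type*} [Finite A] [Finite B] (PA : A → Prop) (PB : B → Prop)
    (cA : A → ℕ) (cB : B → ℕ) (s : ℕ) :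
    Nat.card {p : A × B // (PA p.1 ∧ PB p.2) ∧ cA p.1 + cB p.2 = s} =
      ∑ t1 ∈ Finset.range (s + 1),
        Nat.card {x : A // PA x ∧ cA x = t1} * Nat.card {y : B // PB y ∧ cB y = s - t1} := by
  classical
  have hbij : Function.Bijective
      (fun z : (Σ t1 : Fin (s + 1),
          {x : A // PA x ∧ cA x = (t1 : ℕ)} × {y : B // PB y ∧ cB y = s - (t1 : ℕ)}) =>
        (⟨(z.2.1.1, z.2.2.1), ⟨⟨z.2.1.2.1, z.2.2.2.1⟩, by
          have h1 := z.2.1.2.2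
          have h2 := z.2.2.2.2
          have h3 := z.1.isLt
          simp only at h1 h2 ⊢
          omega⟩⟩ :
          {p : A × B // (PA p.1 ∧ PB p.2) ∧ cA p.1 + cB p.2 = s})) := by
    constructor
    · rintro ⟨t1, ⟨x, hx⟩, ⟨y, hy⟩⟩ ⟨t2, ⟨x', hx'⟩, ⟨y', hy'⟩⟩ h
      simp only [Subtype.mk.injEq, Prod.mk.injEq] at h
      obtain ⟨hxx, hyy⟩ := h
      have ht : t1 = t2 := by
        apply Fin.ext
        rw [← hx.2, ← hx'.2, hxx]
      subst ht
      subst hxx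
      subst hyy
      rfl
    · rintro ⟨⟨x, y⟩, ⟨⟨hPA, hPB⟩, hs⟩⟩
      have hs' : cA x + cB y = s := hs
      refine ⟨⟨⟨cA x, by omega⟩, ⟨x, hPA, rfl⟩, ⟨y, hPB, by simp only; omega⟩⟩, rfl⟩
  rw [← Nat.card_congr (Equiv.ofBijective _ hbij), nat_card_sigma]
  rw [← Fin.sum_univ_eq_sum_range
    (fun t1 => Nat.card {x : A // PA x ∧ cA x = t1} * Nat.card {y : B // PB y ∧ cB y = s - t1})]
  congr 1
  funext t1
  rw [Nat.card_prod]

end CardRec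

noncomputable def N (m k n t : ℕ) : ℕ :=
  Nat.card {σ : Equiv.Perm (Fin n) // avoids132 σ ∧ mmp k 0 m 0 σ = t}

/-- the contribution of the max position -/
def chi (m k a : ℕ) : ℕ := if k = 0 ∧ m ≤ a then 1 else 0

lemma fiber_card (m k t : ℕ) (a b c : ℕ) :
    Nat.card {p : Equiv.Perm (Fin a) × Equiv.Perm (Fin b) //
        (avoids132 p.1 ∧ avoids132 p.2) ∧
          mmp (k - 1) 0 m 0 p.1 + mmp k 0 m 0 p.2 + c = t} =
      if c ≤ t then
        ∑ t1 ∈ Finset.range (t - c + 1), N m (k - 1) a t1 * N m k b (t - c - t1)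
      else 0 := by
  by_cases hc : c ≤ t
  · rw [if_pos hc]
    have he : {p : Equiv.Perm (Fin a) × Equiv.Perm (Fin b) //
        (avoids132 p.1 ∧ avoids132 p.2) ∧
          mmp (k - 1) 0 m 0 p.1 + mmp k 0 m 0 p.2 + c = t} ≃
        {p : Equiv.Perm (Fin a) × Equiv.Perm (Fin b) //
        (avoids132 p.1 ∧ avoids132 p.2) ∧
          mmp (k - 1) 0 m 0 p.1 + mmp k 0 m 0 p.2 = t - c} :=
      Equiv.subtypeEquivRight (fun p =>
        ⟨fun ⟨h1, h2⟩ => ⟨h1, by omega⟩, fun ⟨h1, h2⟩ => ⟨h1, by omega⟩⟩)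
    rw [Nat.card_congr he,
      card_pair (fun x => avoids132 x) (fun y => avoids132 y)
        (fun x => mmp (k - 1) 0 m 0 x) (fun y => mmp k 0 m 0 y) (t - c)]
    rfl
  · rw [if_neg hc]
    have : IsEmpty {p : Equiv.Perm (Fin a) × Equiv.Perm (Fin b) //
        (avoids132 p.1 ∧ avoids132 p.2) ∧
          mmp (k - 1) 0 m 0 p.1 + mmp k 0 m 0 p.2 + c = t} :=
      ⟨fun ⟨p, ⟨_, hs⟩⟩ => absurd hs (by omega)⟩
    exact Nat.card_of_isEmpty

lemma N_rec (m k t n : ℕ) :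
    N m k (n + 1) t = ∑ a ∈ Finset.range (n + 1),
      (if chi m k a ≤ t then
        ∑ t1 ∈ Finset.range (t - chi m k a + 1),
          N m (k - 1) a t1 * N m k (n - a) (t - chi m k a - t1)
      else 0) := by
  classical
  have hbij : Function.Bijective
      (fun z : (Σ a : Fin (n + 1),
          {p : Equiv.Perm (Fin (a : ℕ)) × Equiv.Perm (Fin (n - (a : ℕ))) //
            (avoids132 p.1 ∧ avoids132 p.2) ∧
              mmp (k - 1) 0 m 0 p.1 + mmp k 0 m 0 p.2 + chi m k (a : ℕ) = t}) =>
        (⟨buildPerm (z.1 : ℕ) (Nat.lt_succ_iff.mp z.1.isLt) z.2.1.1 z.2.1.2,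
          avoids_buildPerm _ _ _ _ z.2.2.1.1 z.2.2.1.2, by
            rw [mmp_buildPerm]
            exact z.2.2.2⟩ :
          {σ : Equiv.Perm (Fin (n + 1)) // avoids132 σ ∧ mmp k 0 m 0 σ = t})) := by
    constructor
    · rintro ⟨a, ⟨⟨α, β⟩, hz⟩⟩ ⟨a', ⟨⟨α', β'⟩, hz'⟩⟩ h
      simp only [Subtype.mk.injEq] at h
      have ha : a = a' := by
        apply Fin.ext
        by_contra hne
        have e1 : (buildPerm (a : ℕ) (Nat.lt_succ_iff.mp a.isLt) α β ⟨(a : ℕ), a.isLt⟩ : ℕ)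
            = n := bp_eq _ _ _ _ _ rfl
        have e2 : (buildPerm (a' : ℕ) (Nat.lt_succ_iff.mp a'.isLt) α' β' ⟨(a : ℕ), a.isLt⟩ : ℕ)
            = n := by rw [← h]; exact e1
        rcases Nat.lt_trichotomy (a : ℕ) (a' : ℕ) with hlt | heq | hgt
        · have := (bp_lt_range (a' : ℕ) (Nat.lt_succ_iff.mp a'.isLt) α' β'
            ⟨(a : ℕ), a.isLt⟩ hlt).2
          omega
        · exact hne heq
        · have := bp_gt_range (a' : ℕ) (Nat.lt_succ_iff.mp a'.isLt) α' β'
            ⟨(a : ℕ), a.isLt⟩ hgt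
          have h2 := Nat.lt_succ_iff.mp a'.isLt
          omega
      subst ha
      have hα : α = α' := by
        apply Equiv.ext
        intro x
        have e1 := bp_embA (a : ℕ) (Nat.lt_succ_iff.mp a.isLt) α β x
        have e2 := bp_embA (a : ℕ) (Nat.lt_succ_iff.mp a.isLt) α' β' x
        rw [h] at e1
        apply Fin.ext
        omega
      have hβ : β = β' := by
        apply Equiv.ext
        intro x
        have e1 := bp_embB (a : ℕ) (Nat.lt_succ_iff.mp a.isLt) α β x
        have e2 := bp_embB (a : ℕ) (Nat.lt_succ_iff.mp a.isLt) α' β' x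
        rw [h] at e1
        apply Fin.ext
        omega
      subst hα
      subst hβ
      rfl
    · rintro ⟨σ, hav, hcnt⟩
      obtain ⟨a, ha, α, β, h1, h2, heq⟩ := exists_decomp σ hav
      rw [← heq, mmp_buildPerm] at hcnt
      exact ⟨⟨⟨a, by omega⟩, ⟨(α, β), ⟨⟨h1, h2⟩, hcnt⟩⟩⟩, Subtype.ext heq⟩
  rw [N, ← Nat.card_congr (Equiv.ofBijective _ hbij), nat_card_sigma]
  rw [← Fin.sum_univ_eq_sum_range (fun a =>
      (if chi m k a ≤ t then
        ∑ t1 ∈ Finset.range (t - chi m k a + 1),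
          N m (k - 1) a t1 * N m k (n - a) (t - chi m k a - t1)
      else 0))]
  congr 1
  funext a
  rw [fiber_card m k t (a : ℕ) (n - (a : ℕ)) (chi m k (a : ℕ))]

lemma N_zero (m k t : ℕ) : N m k 0 t = if t = 0 then 1 else 0 := by
  by_cases ht : t = 0
  · subst ht
    rw [if_pos rfl, N]
    have hall : ∀ σ : Equiv.Perm (Fin 0), avoids132 σ ∧ mmp k 0 m 0 σ = 0 := by
      intro σ
      constructor
      · rintro ⟨i, -⟩
        exact i.elim0
      · rw [mmp]
        haveI : IsEmpty {i : Fin 0 // mmpMatch k 0 m 0 σ i} := ⟨fun ⟨i, _⟩ => i.elim0⟩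
        exact Nat.card_of_isEmpty
    rw [Nat.card_congr (Equiv.subtypeUnivEquiv hall)]
    rw [Nat.card_eq_fintype_card]
    simp
  · rw [if_neg ht, N]
    have : IsEmpty {σ : Equiv.Perm (Fin 0) // avoids132 σ ∧ mmp k 0 m 0 σ = t} := by
      refine ⟨fun ⟨σ, _, hc⟩ => ht ?_⟩
      rw [← hc, mmp]
      haveI : IsEmpty {i : Fin 0 // mmpMatch k 0 m 0 σ i} := ⟨fun ⟨i, _⟩ => i.elim0⟩
      exact Nat.card_of_isEmpty
    exact Nat.card_of_isEmpty

section Numeric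

/-- (V): counts vanish above the maximum possible number of matches -/
lemma N_vanish (m : ℕ) (hm : 2 ≤ m) :
    ∀ n k t, 1 ≤ t → n < m + k + t → N m k n t = 0 := by
  intro n
  induction n using Nat.strong_induction_on with
  | _ n IH =>
    intro k t ht hn
    match n with
    | 0 => rw [N_zero, if_neg (by omega)]
    | Nat.succ n' =>
      rw [N_rec]
      apply Finset.sum_eq_zero
      intro a haa
      rw [Finset.mem_range] at haa
      by_cases hg : chi m k a ≤ t
      · rw [if_pos hg]
        apply Finset.sum_eq_zero
        intro t1 ht1
        rw [Finset.mem_range] at ht1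
        by_cases hke : k = 0 ∧ m ≤ a
        · have hc : chi m k a = 1 := by rw [chi, if_pos hke]
          rw [hc] at ht1 ⊢
          by_cases hz1 : 1 ≤ t1 ∧ a < m + (k - 1) + t1
          · rw [IH a (by omega) (k - 1) t1 hz1.1 hz1.2, zero_mul]
          · by_cases hz2 : 1 ≤ t - 1 - t1 ∧ n' - a < m + k + (t - 1 - t1)
            · rw [IH (n' - a) (by omega) k (t - 1 - t1) hz2.1 hz2.2, mul_zero]
            · exfalso
              obtain ⟨hk0, hma⟩ := hke
              omega
        · have hc : chi m k a = 0 := by rw [chi, if_neg hke]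
          rw [hc] at ht1 ⊢
          by_cases hz1 : 1 ≤ t1 ∧ a < m + (k - 1) + t1
          · rw [IH a (by omega) (k - 1) t1 hz1.1 hz1.2, zero_mul]
          · by_cases hz2 : 1 ≤ t - 0 - t1 ∧ n' - a < m + k + (t - 0 - t1)
            · rw [IH (n' - a) (by omega) k (t - 0 - t1) hz2.1 hz2.2, mul_zero]
            · exfalso
              omega
      · rw [if_neg hg]

/-- (Z): for short lengths nothing can match -/
lemma N_zero_match (m : ℕ) (hm : 2 ≤ m) :
    ∀ n k, n ≤ m + k → N m k n 0 = catalan n := by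
  intro n
  induction n using Nat.strong_induction_on with
  | _ n IH =>
    intro k hn
    match n with
    | 0 => rw [N_zero, if_pos rfl, catalan_zero]
    | Nat.succ n' =>
      rw [N_rec]
      have hterm : ∀ a ∈ Finset.range (n' + 1),
          (if chi m k a ≤ 0 then
            ∑ t1 ∈ Finset.range (0 - chi m k a + 1),
              N m (k - 1) a t1 * N m k (n' - a) (0 - chi m k a - t1)
          else 0) = catalan a * catalan (n' - a) := by
        intro a haa
        rw [Finset.mem_range] at haa
        have hc : chi m k a = 0 := by
          rw [chi, if_neg]
          rintro ⟨hk0, hma⟩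
          omega
        rw [hc, if_pos (le_refl 0)]
        simp only [Nat.zero_add, Finset.sum_range_one, Nat.sub_zero, Nat.sub_self]
        rw [IH a (by omega) (k - 1) (by omega), IH (n' - a) (by omega) k (by omega)]
      rw [Finset.sum_congr rfl hterm]
      rw [catalan_succ',
        Nat.sum_antidiagonal_eq_sum_range_succ (fun x y => catalan x * catalan y) n']

end Numeric

/-- (G): count with the maximum number of matches -/
lemma N_max' (m : ℕ) (hm : 2 ≤ m) :
    ∀ n k t, 1 ≤ t → n = m + k + t → N m k n t = catalan m := by
  intro n
  induction n using Nat.strong_induction_on with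
  | _ n IH =>
    intro k t ht hn
    match n, hn with
    | 0, hn => exact absurd hn (by omega)
    | Nat.succ n', hn =>
      have hn' : n' + 1 = m + k + t := hn
      rw [N_rec]
      have hother : ∀ a ∈ Finset.range (n' + 1), a ≠ n' →
          (if chi m k a ≤ t then
            ∑ t1 ∈ Finset.range (t - chi m k a + 1),
              N m (k - 1) a t1 * N m k (n' - a) (t - chi m k a - t1)
          else 0) = 0 := by
        intro a hmem hne
        rw [Finset.mem_range] at hmem
        by_cases hke : k = 0 ∧ m ≤ a
        · have hc : chi m k a = 1 := by rw [chi, if_pos hke]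
          rw [hc, if_pos (by omega)]
          apply Finset.sum_eq_zero
          intro t1 ht1
          rw [Finset.mem_range] at ht1
          by_cases hz1 : 1 ≤ t1 ∧ a < m + (k - 1) + t1
          · rw [N_vanish m hm a (k - 1) t1 hz1.1 hz1.2, zero_mul]
          · by_cases hz2 : 1 ≤ t - 1 - t1 ∧ n' - a < m + k + (t - 1 - t1)
            · rw [N_vanish m hm (n' - a) k _ hz2.1 hz2.2, mul_zero]
            · exfalso
              obtain ⟨hk0, hma⟩ := hke
              omega
        · have hc : chi m k a = 0 := by rw [chi, if_neg hke]
          have hke' : k = 0 → a < m := by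
            intro h0
            by_contra hge
            exact hke ⟨h0, by omega⟩
          rw [hc, if_pos (by omega)]
          apply Finset.sum_eq_zero
          intro t1 ht1
          rw [Finset.mem_range] at ht1
          by_cases hz1 : 1 ≤ t1 ∧ a < m + (k - 1) + t1
          · rw [N_vanish m hm a (k - 1) t1 hz1.1 hz1.2, zero_mul]
          · by_cases hz2 : 1 ≤ t - 0 - t1 ∧ n' - a < m + k + (t - 0 - t1)
            · rw [N_vanish m hm (n' - a) k _ hz2.1 hz2.2, mul_zero]
            · exfalso
              omega
      rw [Finset.sum_eq_single_of_mem n' (Finset.mem_range.mpr (by omega)) hother]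
      by_cases hk : k = 0
      · subst hk
        have hc : chi m 0 n' = 1 := by rw [chi, if_pos ⟨rfl, by omega⟩]
        rw [hc, if_pos (by omega)]
        have hother2 : ∀ t1 ∈ Finset.range (t - 1 + 1), t1 ≠ t - 1 →
            N m (0 - 1) n' t1 * N m 0 (n' - n') (t - 1 - t1) = 0 := by
          intro t1 ht1 hne
          rw [Finset.mem_range] at ht1
          rw [Nat.sub_self, N_zero, if_neg (by omega), mul_zero]
        rw [Finset.sum_eq_single_of_mem (t - 1) (Finset.mem_range.mpr (by omega)) hother2]
        rw [Nat.sub_self, Nat.sub_self, N_zero, if_pos rfl, mul_one]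
        show N m 0 n' (t - 1) = catalan m
        by_cases ht2 : t = 1
        · have e0 : t - 1 = 0 := by omega
          have e1 : n' = m := by omega
          rw [e0, e1]
          exact N_zero_match m hm m 0 (by omega)
        · exact IH n' (by omega) 0 (t - 1) (by omega) (by omega)
      · have hc : chi m k n' = 0 := by
          rw [chi, if_neg]
          rintro ⟨h0, -⟩
          exact hk h0
        rw [hc, if_pos (by omega)]
        have hother2 : ∀ t1 ∈ Finset.range (t - 0 + 1), t1 ≠ t - 0 →
            N m (k - 1) n' t1 * N m k (n' - n') (t - 0 - t1) = 0 := by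
          intro t1 ht1 hne
          rw [Finset.mem_range] at ht1
          rw [Nat.sub_self, N_zero, if_neg (by omega), mul_zero]
        rw [Finset.sum_eq_single_of_mem (t - 0) (Finset.mem_range.mpr (by omega)) hother2]
        rw [Nat.sub_self, Nat.sub_self, N_zero, if_pos rfl, mul_one]
        have e0 : t - 0 = t := by omega
        rw [e0]
        exact IH n' (by omega) (k - 1) t ht (by omega)

/-- (E): the count of avoiders of length m+1 with no matches of MMP(0,0,m,0) -/
lemma N_m1 (m : ℕ) (hm : 2 ≤ m) : N m 0 (m + 1) 0 + catalan m = catalan (m + 1) := by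
  have h := N_rec m 0 0 m
  rw [h, Finset.sum_range_succ]
  have hlast : (if chi m 0 m ≤ 0 then
      ∑ t1 ∈ Finset.range (0 - chi m 0 m + 1),
        N m (0 - 1) m t1 * N m 0 (m - m) (0 - chi m 0 m - t1)
    else 0) = 0 := by
    rw [if_neg]
    rw [chi, if_pos ⟨rfl, le_refl m⟩]
    omega
  rw [hlast, add_zero]
  have hterm : ∀ a ∈ Finset.range m,
      (if chi m 0 a ≤ 0 then
        ∑ t1 ∈ Finset.range (0 - chi m 0 a + 1),
          N m (0 - 1) a t1 * N m 0 (m - a) (0 - chi m 0 a - t1)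
      else 0) = catalan a * catalan (m - a) := by
    intro a haa
    rw [Finset.mem_range] at haa
    have hc : chi m 0 a = 0 := by
      rw [chi, if_neg]
      rintro ⟨-, hma⟩
      omega
    rw [hc, if_pos (le_refl 0)]
    simp only [Nat.zero_add, Finset.sum_range_one, Nat.sub_zero, Nat.sub_self]
    rw [N_zero_match m hm a 0 (by omega), N_zero_match m hm (m - a) 0 (by omega)]
  rw [Finset.sum_congr rfl hterm]
  have hc : catalan (m + 1) = ∑ a ∈ Finset.range (m + 1), catalan a * catalan (m - a) := by
    rw [catalan_succ',
      Nat.sum_antidiagonal_eq_sum_range_succ (fun x y => catalan x * catalan y) m]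
  rw [hc, Finset.sum_range_succ, Nat.sub_self, catalan_zero, mul_one]

/-- (D): the main count, one below the maximum -/
lemma N_next' (m : ℕ) (hm : 2 ≤ m) :
    ∀ n k t, n = m + k + t + 2 → N m k n (t + 1) =
      catalan (m + 1) + (2 * k + 1) * catalan m + 2 * catalan m * t := by
  intro n
  induction n using Nat.strong_induction_on with
  | _ n IH =>
    intro k t hn
    match n, hn with
    | 0, hn => exact absurd hn (by omega)
    | Nat.succ n', hn =>
      have hn' : n' + 1 = m + k + t + 2 := hn
      rw [N_rec]
      -- the summand
      set f : ℕ → ℕ := fun a =>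
        (if chi m k a ≤ t + 1 then
          ∑ t1 ∈ Finset.range (t + 1 - chi m k a + 1),
            N m (k - 1) a t1 * N m k (n' - a) (t + 1 - chi m k a - t1)
        else 0) with hf
      show ∑ a ∈ Finset.range (n' + 1), f a = _
      have hsub : ({0, n' - 1, n'} : Finset ℕ) ⊆ Finset.range (n' + 1) := by
        intro x hx
        rw [Finset.mem_insert, Finset.mem_insert, Finset.mem_singleton] at hx
        rw [Finset.mem_range]
        omega
      have hzero : ∀ a ∈ Finset.range (n' + 1), a ∉ ({0, n' - 1, n'} : Finset ℕ) →
          f a = 0 := by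
        intro a hmem hnot
        rw [Finset.mem_range] at hmem
        rw [Finset.mem_insert, Finset.mem_insert, Finset.mem_singleton] at hnot
        push_neg at hnot
        obtain ⟨ha0, ha1, ha2⟩ := hnot
        simp only [hf]
        by_cases hke : k = 0 ∧ m ≤ a
        · have hc : chi m k a = 1 := by rw [chi, if_pos hke]
          rw [hc, if_pos (by omega)]
          apply Finset.sum_eq_zero
          intro t1 ht1
          rw [Finset.mem_range] at ht1
          by_cases hz1 : 1 ≤ t1 ∧ a < m + (k - 1) + t1
          · rw [N_vanish m hm a (k - 1) t1 hz1.1 hz1.2, zero_mul]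
          · by_cases hz2 : 1 ≤ t + 1 - 1 - t1 ∧ n' - a < m + k + (t + 1 - 1 - t1)
            · rw [N_vanish m hm (n' - a) k _ hz2.1 hz2.2, mul_zero]
            · exfalso
              obtain ⟨hk0, hma⟩ := hke
              omega
        · have hc : chi m k a = 0 := by rw [chi, if_neg hke]
          have hke' : k = 0 → a < m := by
            intro h0
            by_contra hge
            exact hke ⟨h0, by omega⟩
          rw [hc, if_pos (by omega)]
          apply Finset.sum_eq_zero
          intro t1 ht1
          rw [Finset.mem_range] at ht1
          by_cases hz1 : 1 ≤ t1 ∧ a < m + (k - 1) + t1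
          · rw [N_vanish m hm a (k - 1) t1 hz1.1 hz1.2, zero_mul]
          · by_cases hz2 : 1 ≤ t + 1 - 0 - t1 ∧ n' - a < m + k + (t + 1 - 0 - t1)
            · rw [N_vanish m hm (n' - a) k _ hz2.1 hz2.2, mul_zero]
            · exfalso
              omega
      rw [← Finset.sum_subset hsub hzero]
      have hne1 : (0 : ℕ) ∉ ({n' - 1, n'} : Finset ℕ) := by
        rw [Finset.mem_insert, Finset.mem_singleton]
        omega
      have hne2 : (n' - 1 : ℕ) ∉ ({n'} : Finset ℕ) := by
        rw [Finset.mem_singleton]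
        omega
      rw [Finset.sum_insert hne1, Finset.sum_insert hne2, Finset.sum_singleton]
      -- evaluate f 0
      have hf0 : f 0 = catalan m := by
        simp only [hf]
        have hc : chi m k 0 = 0 := by
          rw [chi, if_neg]
          rintro ⟨-, hma⟩
          omega
        rw [hc, if_pos (by omega)]
        rw [Finset.sum_eq_single_of_mem 0 (Finset.mem_range.mpr (by omega))]
        · rw [N_zero, if_pos rfl, one_mul, Nat.sub_zero, Nat.sub_zero]
          exact N_max' m hm n' k (t + 1) (by omega) (by omega)
        · intro t1 ht1 hne
          rw [N_zero, if_neg hne, zero_mul]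
      -- evaluate f (n' - 1)
      have hf1 : f (n' - 1) = catalan m := by
        simp only [hf]
        have hsub1 : n' - (n' - 1) = 1 := by omega
        by_cases hk : k = 0
        · subst hk
          have hc : chi m 0 (n' - 1) = 1 := by rw [chi, if_pos ⟨rfl, by omega⟩]
          rw [hc, if_pos (by omega)]
          rw [Finset.sum_eq_single_of_mem (t + 1 - 1 - 0) (Finset.mem_range.mpr (by omega))]
          · rw [hsub1]
            have e1 : t + 1 - 1 - (t + 1 - 1 - 0) = 0 := by omega
            have e2 : t + 1 - 1 - 0 = t := by omega
            rw [e1, e2, N_zero_match m hm 1 0 (by omega), catalan_one, mul_one]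
            have h01 : (0 : ℕ) - 1 = 0 := rfl
            rw [h01]
            by_cases ht0 : t = 0
            · subst ht0
              have em : n' - 1 = m := by omega
              rw [em]
              exact N_zero_match m hm m 0 (by omega)
            · exact N_max' m hm (n' - 1) 0 t (by omega) (by omega)
          · intro t1 ht1 hne
            rw [Finset.mem_range] at ht1
            rw [hsub1, N_vanish m hm 1 0 (t + 1 - 1 - t1) (by omega) (by omega), mul_zero]
        · have hc : chi m k (n' - 1) = 0 := by
            rw [chi, if_neg]
            rintro ⟨h0, -⟩
            exact hk h0
          rw [hc, if_pos (by omega)]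
          rw [Finset.sum_eq_single_of_mem (t + 1 - 0 - 0) (Finset.mem_range.mpr (by omega))]
          · rw [hsub1]
            have e1 : t + 1 - 0 - (t + 1 - 0 - 0) = 0 := by omega
            have e2 : t + 1 - 0 - 0 = t + 1 := by omega
            rw [e1, e2, N_zero_match m hm 1 k (by omega), catalan_one, mul_one]
            exact N_max' m hm (n' - 1) (k - 1) (t + 1) (by omega) (by omega)
          · intro t1 ht1 hne
            rw [Finset.mem_range] at ht1
            rw [hsub1, N_vanish m hm 1 k (t + 1 - 0 - t1) (by omega) (by omega), mul_zero]
      rw [hf0, hf1]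
      -- evaluate f n' and finish
      rcases k with _ | k'
      · -- k = 0
        have hc : chi m 0 n' = 1 := by rw [chi, if_pos ⟨rfl, by omega⟩]
        simp only [hf]
        rw [hc, if_pos (by omega)]
        rw [Finset.sum_eq_single_of_mem (t + 1 - 1 - 0) (Finset.mem_range.mpr (by omega))]
        · rw [Nat.sub_self]
          have e1 : t + 1 - 1 - (t + 1 - 1 - 0) = 0 := by omega
          have e2 : t + 1 - 1 - 0 = t := by omega
          rw [e1, e2, N_zero, if_pos rfl, mul_one]
          rcases t with _ | t'
          · -- t = 0, length n' = m + 1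
            have en : n' = m + 1 := by omega
            rw [en]
            have := N_m1 m hm
            have h01 : (0 : ℕ) - 1 = 0 := rfl
            rw [h01]
            omega
          · have hrec := IH n' (by omega) 0 t' (by omega)
            have h01 : (0 : ℕ) - 1 = 0 := rfl
            rw [h01, hrec]
            ring
        · intro t1 ht1 hne
          rw [Finset.mem_range] at ht1
          rw [Nat.sub_self, N_zero, if_neg (by omega), mul_zero]
      · -- k = k' + 1
        have hc : chi m (k' + 1) n' = 0 := by
          rw [chi, if_neg]
          rintro ⟨h0, -⟩
          exact absurd h0 (by omega)
        simp only [hf]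
        rw [hc, if_pos (by omega)]
        rw [Finset.sum_eq_single_of_mem (t + 1 - 0 - 0) (Finset.mem_range.mpr (by omega))]
        · rw [Nat.sub_self]
          have e1 : t + 1 - 0 - (t + 1 - 0 - 0) = 0 := by omega
          have e2 : t + 1 - 0 - 0 = t + 1 := by omega
          rw [e1, e2, N_zero, if_pos rfl, mul_one]
          have hk1 : k' + 1 - 1 = k' := by omega
          rw [hk1]
          have hrec := IH n' (by omega) k' t (by omega)
          rw [hrec]
          ring
        · intro t1 ht1 hne
          rw [Finset.mem_range] at ht1
          rw [Nat.sub_self, N_zero, if_neg (by omega), mul_zero]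

end MMPAux

theorem stmt11 (k m n : ℕ) (hk : 1 ≤ k) (hm : 2 ≤ m) (hn : m + k + 2 ≤ n) :
    Nat.card {σ : Equiv.Perm (Fin n) // avoids132 σ ∧ mmp k 0 m 0 σ = n - m - k - 1} =
      catalan (m + 1) + (2 * k + 1) * catalan m +
        2 * catalan m * (n - k - m - 2) := by
  have h1 : n - m - k - 1 = (n - m - k - 2) + 1 := by omega
  have h2 : n - k - m - 2 = n - m - k - 2 := by omega
  show MMPAux.N m k n (n - m - k - 1) = _
  rw [h1, h2]
  exact MMPAux.N_next' m hm n k (n - m - k - 2) (by omega)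
end
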